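/- arXiv:1306.3628 — 7 statements merged into one kernel-verified Lean document; each statement's English description precedes it below -/
import Mathlib

section
/- Let c1, c2, c5, ς1, ς2, ς3 be real constants and let f, a : ℝ → ℝ be smooth functions. Set u = c1·f − c2·f'', v = c5·a, G = ς2·a' − ς1·f'' + (3c1/2)·f² − c2·f·f'' − (c2/2)·(f')² + (c5/2)·a², and K = 2ς3·a + c5·a·f − ς2·f'. Then the following two identities hold at every point of ℝ: (i) −G' = ς1·f''' − ς2·a'' − 2·u·f' − u'·f − v·a', and (ii) −K' = ς2·f'' − 2ς3·a' − (v·f)'. (This is the bosonic sector of Theorem 3.1: the right-hand side of the Euler equation for the metric M_{c1,c2,c1/4,c2,c5,−c5} coincides with the Hamiltonian vector field of H2 with respect to the Lie–Poisson structure frozen at the point Û0 = ((c1/2)dx², 0, 0, 0, (c2, 0, c5/2)), so the equation is bihamiltonian.) -/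
/-- Bosonic sector of Theorem 3.1: with `u = c1 f − c2 f''`, `v = c5 a`,
`G = δH2/δf` and `K = δH2/δa`, the identities `−G' = ς1 f''' − ς2 a'' − 2 u f' − u' f − v a'`
and `−K' = ς2 f'' − 2ς3 a' − (v f)'` hold at every point. -/
theorem statement_3 (c1 c2 c5 ς1 ς2 ς3 : ℝ) (f a : ℝ → ℝ)
    (hf : ContDiff ℝ (⊤ : ℕ∞) f) (ha : ContDiff ℝ (⊤ : ℕ∞) a)
    (u v G K : ℝ → ℝ)
    (hu : u = fun x => c1 * f x - c2 * deriv (deriv f) x)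
    (hv : v = fun x => c5 * a x)
    (hG : G = fun x => ς2 * deriv a x - ς1 * deriv (deriv f) x + (3*c1/2) * (f x)^2
      - c2 * f x * deriv (deriv f) x - (c2/2) * (deriv f x)^2 + (c5/2) * (a x)^2)
    (hK : K = fun x => 2*ς3 * a x + c5 * a x * f x - ς2 * deriv f x) :
    (∀ x : ℝ, -deriv G x = ς1 * deriv (deriv (deriv f)) x - ς2 * deriv (deriv a) x
        - 2 * u x * deriv f x - deriv u x * f x - v x * deriv a x)
    ∧ (∀ x : ℝ, -deriv K x = ς2 * deriv (deriv f) x - 2*ς3 * deriv a x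
        - deriv (fun y => v y * f y) x) := by
  have hfi : ContDiff ℝ (⊤ : ℕ∞) f := hf.of_le (by simp)
  have hai : ContDiff ℝ (⊤ : ℕ∞) a := ha.of_le (by simp)
  have hf1 : Differentiable ℝ f := hfi.differentiable (by simp)
  have hf2 : Differentiable ℝ (deriv f) :=
    (hfi.iterate_deriv 1).differentiable (by simp)
  have hf3 : Differentiable ℝ (deriv (deriv f)) :=
    (hfi.iterate_deriv 2).differentiable (by simp)
  have ha1 : Differentiable ℝ a := hai.differentiable (by simp)
  have ha2 : Differentiable ℝ (deriv a) :=
    (hai.iterate_deriv 1).differentiable (by simp)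
  have Hf1 : ∀ x, HasDerivAt f (deriv f x) x := fun x => (hf1 x).hasDerivAt
  have Hf2 : ∀ x, HasDerivAt (deriv f) (deriv (deriv f) x) x := fun x => (hf2 x).hasDerivAt
  have Hf3 : ∀ x, HasDerivAt (deriv (deriv f)) (deriv (deriv (deriv f)) x) x :=
    fun x => (hf3 x).hasDerivAt
  have Ha1 : ∀ x, HasDerivAt a (deriv a x) x := fun x => (ha1 x).hasDerivAt
  have Ha2 : ∀ x, HasDerivAt (deriv a) (deriv (deriv a) x) x := fun x => (ha2 x).hasDerivAt
  constructor
  · intro x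
    have hu' : HasDerivAt u (c1 * deriv f x - c2 * deriv (deriv (deriv f)) x) x := by
      rw [hu]; exact ((Hf1 x).const_mul c1).sub ((Hf3 x).const_mul c2)
    have hG' : HasDerivAt G
        (ς2 * deriv (deriv a) x - ς1 * deriv (deriv (deriv f)) x
          + (3*c1/2) * ((2:ℕ) * f x ^ (2-1) * deriv f x)
          - (c2 * deriv f x * deriv (deriv f) x + c2 * f x * deriv (deriv (deriv f)) x)
          - (c2/2) * ((2:ℕ) * deriv f x ^ (2-1) * deriv (deriv f) x)
          + (c5/2) * ((2:ℕ) * a x ^ (2-1) * deriv a x)) x := by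
      rw [hG]
      exact ((((((Ha2 x).const_mul ς2).sub ((Hf3 x).const_mul ς1)).add
        (((Hf1 x).pow 2).const_mul (3*c1/2))).sub
        (((Hf1 x).const_mul c2).mul (Hf3 x))).sub
        (((Hf2 x).pow 2).const_mul (c2/2))).add
        (((Ha1 x).pow 2).const_mul (c5/2))
    rw [hG'.deriv, hu'.deriv, hu, hv]
    push_cast
    ring
  · intro x
    have hK' : HasDerivAt K
        (2*ς3 * deriv a x + (c5 * deriv a x * f x + c5 * a x * deriv f x)
          - ς2 * deriv (deriv f) x) x := by
      rw [hK]
      exact (((Ha1 x).const_mul (2*ς3)).add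
        (((Ha1 x).const_mul c5).mul (Hf1 x))).sub ((Hf2 x).const_mul ς2)
    have hvf : HasDerivAt (fun y => v y * f y)
        (c5 * deriv a x * f x + c5 * a x * deriv f x) x := by
      rw [hv]
      exact ((Ha1 x).const_mul c5).mul (Hf1 x)
    rw [hK'.deriv, hvf.deriv]
    ring
end

section
/- Let L > 0 and let c1, c2, c5, ς1, ς2, ς3 be real constants. Let f, a : ℝ × ℝ → ℝ be smooth functions of (t,x), L-periodic in x for every t, and set u = c1·f − c2·f_xx and v = c5·a. Suppose that for all (t,x): u_t = ς1·f_xxx − ς2·a_xx − 2·u·f_x − u_x·f − v·a_x and v_t = ς2·f_xx − 2ς3·a_x − (v·f)_x. Then the function t ↦ (1/2)∫₀ᴸ [u(t,x)·f(t,x) + v(t,x)·a(t,x)] dx is constant in t. (Conservation of the energy Hamiltonian H1 along the bosonic Euler flow, for all values of the metric and central parameters.) -/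
open Function MeasureTheory intervalIntegral Metric Set

noncomputable section

namespace NS4

/-- directional partial derivative -/
noncomputable def pd (v : ℝ × ℝ) (g : ℝ × ℝ → ℝ) : ℝ × ℝ → ℝ := fun p => fderiv ℝ g p v

variable {g : ℝ × ℝ → ℝ}

lemma pd_contDiff (hg : ContDiff ℝ (⊤ : ℕ∞) g) (v : ℝ × ℝ) : ContDiff ℝ (⊤ : ℕ∞) (pd v g) :=
  (hg.fderiv_right (by simp)).clm_apply contDiff_const

lemma hasDerivAt_pd1 (hg : ContDiff ℝ (⊤ : ℕ∞) g) (t x : ℝ) :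
    HasDerivAt (fun y => g (t, y)) (pd (0,1) g (t, x)) x := by
  have h1 : HasFDerivAt g (fderiv ℝ g (t,x)) (t,x) :=
    (hg.differentiable (by simp) (t,x)).hasFDerivAt
  have h2 : HasDerivAt (fun y => ((t, y) : ℝ × ℝ)) (((0:ℝ),(1:ℝ)) : ℝ × ℝ) x :=
    (hasDerivAt_const x t).prodMk (hasDerivAt_id x)
  exact h1.comp_hasDerivAt x h2

lemma hasDerivAt_pd0 (hg : ContDiff ℝ (⊤ : ℕ∞) g) (t x : ℝ) :
    HasDerivAt (fun s => g (s, x)) (pd (1,0) g (t, x)) t := by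
  have h1 : HasFDerivAt g (fderiv ℝ g (t,x)) (t,x) :=
    (hg.differentiable (by simp) (t,x)).hasFDerivAt
  have h2 : HasDerivAt (fun s => ((s, x) : ℝ × ℝ)) (((1:ℝ),(0:ℝ)) : ℝ × ℝ) t :=
    (hasDerivAt_id t).prodMk (hasDerivAt_const t x)
  exact h1.comp_hasDerivAt t h2

lemma pd_comm (hg : ContDiff ℝ (⊤ : ℕ∞) g) (v w : ℝ × ℝ) :
    pd v (pd w g) = pd w (pd v g) := by
  funext p
  have hdf : DifferentiableAt ℝ (fderiv ℝ g) p :=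
    ((hg.fderiv_right (m := (⊤ : ℕ∞)) (by simp)).differentiable (by simp)) p
  have hrw : ∀ z : ℝ × ℝ, fderiv ℝ (fun q => fderiv ℝ g q z) p
      = (fderiv ℝ (fderiv ℝ g) p).flip z := by
    intro z
    have := fderiv_clm_apply (c := fderiv ℝ g) (u := fun _ => z) hdf
      (differentiableAt_const z)
    simpa using this
  have hsymm : fderiv ℝ (fderiv ℝ g) p v w = fderiv ℝ (fderiv ℝ g) p w v :=
    (hg.contDiffAt.isSymmSndFDerivAt (by norm_num; exact le_trans (by norm_num : (2:WithTop ℕ∞) ≤ ((2:ℕ∞):WithTop ℕ∞)) (WithTop.coe_le_coe.mpr le_top))) v w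
  show fderiv ℝ (fun q => fderiv ℝ g q w) p v = fderiv ℝ (fun q => fderiv ℝ g q v) p w
  rw [hrw w, hrw v]
  simpa using hsymm

lemma pd_periodic {L : ℝ} (hg : ContDiff ℝ (⊤ : ℕ∞) g)
    (hper : ∀ p : ℝ × ℝ, g (p + (0, L)) = g p) (v : ℝ × ℝ) :
    ∀ p : ℝ × ℝ, pd v g (p + (0, L)) = pd v g p := by
  intro p
  have h1 : HasFDerivAt (fun q : ℝ × ℝ => g (q + (0,L)))
      ((fderiv ℝ g (p + (0,L))).comp (ContinuousLinearMap.id ℝ (ℝ × ℝ))) p :=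
    ((hg.differentiable (by simp) (p + (0,L))).hasFDerivAt).comp p
      ((hasFDerivAt_id p).add_const (0,L))
  rw [funext hper, ContinuousLinearMap.comp_id] at h1
  have h2 : fderiv ℝ g p = fderiv ℝ g (p + (0,L)) := h1.fderiv
  show fderiv ℝ g (p + (0,L)) v = fderiv ℝ g p v
  rw [h2]

theorem main (L : ℝ) (hL : 0 < L) (c1 c2 c5 ς1 ς2 ς3 : ℝ)
    (F A : ℝ × ℝ → ℝ) (hF : ContDiff ℝ (⊤ : ℕ∞) F) (hA : ContDiff ℝ (⊤ : ℕ∞) A)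
    (hFper : ∀ p : ℝ × ℝ, F (p + (0, L)) = F p)
    (hAper : ∀ p : ℝ × ℝ, A (p + (0, L)) = A p)
    (E1 : ∀ p : ℝ × ℝ,
      c1 * pd (1,0) F p - c2 * pd (1,0) (pd (0,1) (pd (0,1) F)) p
       = ς1 * pd (0,1) (pd (0,1) (pd (0,1) F)) p - ς2 * pd (0,1) (pd (0,1) A) p
         - 2 * (c1 * F p - c2 * pd (0,1) (pd (0,1) F) p) * pd (0,1) F p
         - (c1 * pd (0,1) F p - c2 * pd (0,1) (pd (0,1) (pd (0,1) F)) p) * F p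
         - (c5 * A p) * pd (0,1) A p)
    (E2 : ∀ p : ℝ × ℝ,
      c5 * pd (1,0) A p
       = ς2 * pd (0,1) (pd (0,1) F) p - 2*ς3 * pd (0,1) A p
         - ((c5 * pd (0,1) A p) * F p + (c5 * A p) * pd (0,1) F p)) :
    ∀ t₁ t₂ : ℝ,
      (∫ x in (0:ℝ)..L,
        ((c1 * F (t₁,x) - c2 * pd (0,1) (pd (0,1) F) (t₁,x)) * F (t₁,x)
          + (c5 * A (t₁,x)) * A (t₁,x)))
      = ∫ x in (0:ℝ)..L,
        ((c1 * F (t₂,x) - c2 * pd (0,1) (pd (0,1) F) (t₂,x)) * F (t₂,x)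
          + (c5 * A (t₂,x)) * A (t₂,x)) := by
  -- smoothness of everything
  have hfx : ContDiff ℝ (⊤ : ℕ∞) (pd (0,1) F) := pd_contDiff hF _
  have hfxx : ContDiff ℝ (⊤ : ℕ∞) (pd (0,1) (pd (0,1) F)) := pd_contDiff hfx _
  have hfxxx : ContDiff ℝ (⊤ : ℕ∞) (pd (0,1) (pd (0,1) (pd (0,1) F))) := pd_contDiff hfxx _
  have hft : ContDiff ℝ (⊤ : ℕ∞) (pd (1,0) F) := pd_contDiff hF _
  have hftx : ContDiff ℝ (⊤ : ℕ∞) (pd (0,1) (pd (1,0) F)) := pd_contDiff hft _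
  have hax : ContDiff ℝ (⊤ : ℕ∞) (pd (0,1) A) := pd_contDiff hA _
  have haxx : ContDiff ℝ (⊤ : ℕ∞) (pd (0,1) (pd (0,1) A)) := pd_contDiff hax _
  -- the integrand
  set FF : ℝ × ℝ → ℝ := fun p =>
      (c1 * F p - c2 * pd (0,1) (pd (0,1) F) p) * F p + (c5 * A p) * A p with hFFdef
  have hFFsm : ContDiff ℝ (⊤ : ℕ∞) FF :=
    (((contDiff_const.mul hF).sub (contDiff_const.mul hfxx)).mul hF).add
      ((contDiff_const.mul hA).mul hA)
  have hFFc : Continuous FF := hFFsm.continuous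
  have hFtc : Continuous (pd (1,0) FF) := (pd_contDiff hFFsm _).continuous
  -- Clairaut
  have hcomm : pd (1,0) (pd (0,1) (pd (0,1) F)) = pd (0,1) (pd (0,1) (pd (1,0) F)) :=
    (pd_comm hfx (1,0) (0,1)).trans (congrArg (pd (0,1)) (pd_comm hF (1,0) (0,1)))
  rw [hcomm] at E1
  -- the time derivative of the integrand, pointwise
  have hFFt : ∀ t x : ℝ, pd (1,0) FF (t,x)
      = (c1 * pd (1,0) F (t,x) - c2 * pd (0,1) (pd (0,1) (pd (1,0) F)) (t,x)) * F (t,x)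
        + (c1 * F (t,x) - c2 * pd (0,1) (pd (0,1) F) (t,x)) * pd (1,0) F (t,x)
        + ((c5 * pd (1,0) A (t,x)) * A (t,x) + (c5 * A (t,x)) * pd (1,0) A (t,x)) := by
    intro t x
    have h1 := hasDerivAt_pd0 hFFsm t x
    have h2 : HasDerivAt (fun s => FF (s,x))
        ((c1 * pd (1,0) F (t,x) - c2 * pd (1,0) (pd (0,1) (pd (0,1) F)) (t,x)) * F (t,x)
          + (c1 * F (t,x) - c2 * pd (0,1) (pd (0,1) F) (t,x)) * pd (1,0) F (t,x)
          + ((c5 * pd (1,0) A (t,x)) * A (t,x) + (c5 * A (t,x)) * pd (1,0) A (t,x))) t :=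
      ((((hasDerivAt_pd0 hF t x).const_mul c1).sub
          ((hasDerivAt_pd0 hfxx t x).const_mul c2)).mul (hasDerivAt_pd0 hF t x)).add
        (((hasDerivAt_pd0 hA t x).const_mul c5).mul (hasDerivAt_pd0 hA t x))
    rw [hcomm] at h2
    exact h1.unique h2
  -- G : an x-antiderivative of pd (1,0) FF, periodic in x
  set G : ℝ × ℝ → ℝ := fun p =>
      c2 * (F p * pd (0,1) (pd (1,0) F) p - pd (0,1) F p * pd (1,0) F p)
      + (2*ς1) * (pd (0,1) (pd (0,1) F) p * F p)
      - ς1 * (pd (0,1) F p * pd (0,1) F p)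
      + (2*ς2) * (pd (0,1) F p * A p - pd (0,1) A p * F p)
      - 2 * ((c1 * F p - c2 * pd (0,1) (pd (0,1) F) p) * (F p * F p))
      - 2 * ((c5 * A p) * (F p * A p))
      - (2*ς3) * (A p * A p) with hGdef
  have hGW : ∀ t x : ℝ, HasDerivAt (fun y => G (t,y)) (pd (1,0) FF (t,x)) x := by
    intro t x
    have hF1 := hasDerivAt_pd1 hF t x
    have hfx1 := hasDerivAt_pd1 hfx t x
    have hfxx1 := hasDerivAt_pd1 hfxx t x
    have hft1 := hasDerivAt_pd1 hft t x
    have hftx1 := hasDerivAt_pd1 hftx t x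
    have hA1 := hasDerivAt_pd1 hA t x
    have hax1 := hasDerivAt_pd1 hax t x
    have hbuild : HasDerivAt (fun y => G (t,y))
        (c2 * ((pd (0,1) F (t,x) * pd (0,1) (pd (1,0) F) (t,x)
               + F (t,x) * pd (0,1) (pd (0,1) (pd (1,0) F)) (t,x))
             - (pd (0,1) (pd (0,1) F) (t,x) * pd (1,0) F (t,x)
               + pd (0,1) F (t,x) * pd (0,1) (pd (1,0) F) (t,x)))
         + (2*ς1) * (pd (0,1) (pd (0,1) (pd (0,1) F)) (t,x) * F (t,x)
               + pd (0,1) (pd (0,1) F) (t,x) * pd (0,1) F (t,x))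
         - ς1 * (pd (0,1) (pd (0,1) F) (t,x) * pd (0,1) F (t,x)
               + pd (0,1) F (t,x) * pd (0,1) (pd (0,1) F) (t,x))
         + (2*ς2) * ((pd (0,1) (pd (0,1) F) (t,x) * A (t,x)
               + pd (0,1) F (t,x) * pd (0,1) A (t,x))
             - (pd (0,1) (pd (0,1) A) (t,x) * F (t,x)
               + pd (0,1) A (t,x) * pd (0,1) F (t,x)))
         - 2 * ((c1 * pd (0,1) F (t,x) - c2 * pd (0,1) (pd (0,1) (pd (0,1) F)) (t,x))
                  * (F (t,x) * F (t,x))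
             + (c1 * F (t,x) - c2 * pd (0,1) (pd (0,1) F) (t,x))
                  * (pd (0,1) F (t,x) * F (t,x) + F (t,x) * pd (0,1) F (t,x)))
         - 2 * ((c5 * pd (0,1) A (t,x)) * (F (t,x) * A (t,x))
             + (c5 * A (t,x)) * (pd (0,1) F (t,x) * A (t,x) + F (t,x) * pd (0,1) A (t,x)))
         - (2*ς3) * (pd (0,1) A (t,x) * A (t,x) + A (t,x) * pd (0,1) A (t,x))) x := by
      simp only [hGdef]
      exact ((((((((hF1.mul hftx1).sub (hfx1.mul hft1)).const_mul c2).add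
          (((hfxx1.mul hF1).const_mul (2*ς1)))).sub ((hfx1.mul hfx1).const_mul ς1)).add
          (((hfx1.mul hA1).sub (hax1.mul hF1)).const_mul (2*ς2))).sub
          ((((hF1.const_mul c1).sub (hfxx1.const_mul c2)).mul (hF1.mul hF1)).const_mul 2)).sub
          (((hA1.const_mul c5).mul (hF1.mul hA1)).const_mul 2)).sub
          ((hA1.mul hA1).const_mul (2*ς3))
    have hval : pd (1,0) FF (t,x)
        = (c2 * ((pd (0,1) F (t,x) * pd (0,1) (pd (1,0) F) (t,x)
               + F (t,x) * pd (0,1) (pd (0,1) (pd (1,0) F)) (t,x))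
             - (pd (0,1) (pd (0,1) F) (t,x) * pd (1,0) F (t,x)
               + pd (0,1) F (t,x) * pd (0,1) (pd (1,0) F) (t,x)))
         + (2*ς1) * (pd (0,1) (pd (0,1) (pd (0,1) F)) (t,x) * F (t,x)
               + pd (0,1) (pd (0,1) F) (t,x) * pd (0,1) F (t,x))
         - ς1 * (pd (0,1) (pd (0,1) F) (t,x) * pd (0,1) F (t,x)
               + pd (0,1) F (t,x) * pd (0,1) (pd (0,1) F) (t,x))
         + (2*ς2) * ((pd (0,1) (pd (0,1) F) (t,x) * A (t,x)
               + pd (0,1) F (t,x) * pd (0,1) A (t,x))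
             - (pd (0,1) (pd (0,1) A) (t,x) * F (t,x)
               + pd (0,1) A (t,x) * pd (0,1) F (t,x)))
         - 2 * ((c1 * pd (0,1) F (t,x) - c2 * pd (0,1) (pd (0,1) (pd (0,1) F)) (t,x))
                  * (F (t,x) * F (t,x))
             + (c1 * F (t,x) - c2 * pd (0,1) (pd (0,1) F) (t,x))
                  * (pd (0,1) F (t,x) * F (t,x) + F (t,x) * pd (0,1) F (t,x)))
         - 2 * ((c5 * pd (0,1) A (t,x)) * (F (t,x) * A (t,x))
             + (c5 * A (t,x)) * (pd (0,1) F (t,x) * A (t,x) + F (t,x) * pd (0,1) A (t,x)))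
         - (2*ς3) * (pd (0,1) A (t,x) * A (t,x) + A (t,x) * pd (0,1) A (t,x))) := by
      rw [hFFt t x]
      linear_combination (2 * F (t,x)) * E1 (t,x) + (2 * A (t,x)) * E2 (t,x)
    rw [hval]
    exact hbuild
  -- the integral of the time derivative vanishes
  have hzero : ∀ t : ℝ, (∫ x in (0:ℝ)..L, pd (1,0) FF (t,x)) = 0 := by
    intro t
    have hint : IntervalIntegrable (fun x => pd (1,0) FF (t,x)) volume 0 L :=
      (hFtc.comp (Continuous.prodMk_right t)).intervalIntegrable _ _
    have heval : (∫ x in (0:ℝ)..L, pd (1,0) FF (t,x)) = G (t,L) - G (t,0) :=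
      intervalIntegral.integral_eq_sub_of_hasDerivAt (fun x _ => hGW t x) hint
    rw [heval]
    have e : ((t,(0:ℝ)) : ℝ × ℝ) + (0,L) = (t, L) := by
      simp [Prod.ext_iff]
    have pF := hFper ((t,0) : ℝ × ℝ)
    have pfx := pd_periodic hF hFper (0,1) ((t,0) : ℝ × ℝ)
    have pfxx := pd_periodic hfx (pd_periodic hF hFper (0,1)) (0,1) ((t,0) : ℝ × ℝ)
    have pft := pd_periodic hF hFper (1,0) ((t,0) : ℝ × ℝ)
    have pftx := pd_periodic hft (pd_periodic hF hFper (1,0)) (0,1) ((t,0) : ℝ × ℝ)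
    have pA := hAper ((t,0) : ℝ × ℝ)
    have pax := pd_periodic hA hAper (0,1) ((t,0) : ℝ × ℝ)
    rw [e] at pF pfx pfxx pft pftx pA pax
    simp only [hGdef]
    rw [pF, pfx, pfxx, pft, pftx, pA, pax]
    ring
  -- differentiation under the integral sign
  have hE : ∀ t₀ : ℝ, HasDerivAt (fun t => ∫ x in (0:ℝ)..L, FF (t,x)) 0 t₀ := by
    intro t₀
    obtain ⟨C, hC⟩ := ((isCompact_Icc (a := t₀-1) (b := t₀+1)).prod
        (isCompact_uIcc (a := (0:ℝ)) (b := L))).exists_bound_of_continuousOn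
        hFtc.continuousOn
    have hderiv := (intervalIntegral.hasDerivAt_integral_of_dominated_loc_of_deriv_le
        (μ := volume) (F := fun t x => FF (t,x)) (F' := fun t x => pd (1,0) FF (t,x))
        (x₀ := t₀) (bound := fun _ => C) (a := 0) (b := L) (s := Metric.ball t₀ 1) (Metric.ball_mem_nhds t₀ one_pos)
        (Filter.Eventually.of_forall fun s =>
          (hFFc.comp (Continuous.prodMk_right s)).aestronglyMeasurable)
        ((hFFc.comp (Continuous.prodMk_right t₀)).intervalIntegrable _ _)
        ((hFtc.comp (Continuous.prodMk_right t₀)).aestronglyMeasurable)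
        (MeasureTheory.ae_of_all _ fun x hx s hs => by
          have hs' : s ∈ Set.Icc (t₀-1) (t₀+1) := by
            rw [Real.ball_eq_Ioo] at hs
            exact ⟨le_of_lt hs.1, le_of_lt hs.2⟩
          exact hC (s,x) ⟨hs', Set.uIoc_subset_uIcc hx⟩)
        intervalIntegrable_const
        (MeasureTheory.ae_of_all _ fun x hx s hs => hasDerivAt_pd0 hFFsm s x)).2
    rw [hzero t₀] at hderiv
    exact hderiv
  intro t₁ t₂
  exact is_const_of_deriv_eq_zero (f := fun t => ∫ x in (0:ℝ)..L, FF (t,x))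
    (fun t => (hE t).differentiableAt) (fun t => (hE t).deriv) t₁ t₂

end NS4

open NS4 in
/-- Conservation of the energy Hamiltonian
`H1 = (1/2)∫ (u f + v a) dx` along the bosonic Euler flow of the
generalized Neveu–Schwarz algebra, for all metric and central parameters. -/
theorem statement_4 (L : ℝ) (hL : 0 < L) (c1 c2 c5 ς1 ς2 ς3 : ℝ)
    (f a : ℝ → ℝ → ℝ)
    (hf : ContDiff ℝ (⊤ : ℕ∞) (Function.uncurry f)) (ha : ContDiff ℝ (⊤ : ℕ∞) (Function.uncurry a))
    (hfp : ∀ t, Function.Periodic (f t) L) (hap : ∀ t, Function.Periodic (a t) L)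
    (u v : ℝ → ℝ → ℝ)
    (hu : u = fun t x => c1 * f t x - c2 * deriv (deriv (f t)) x)
    (hv : v = fun t x => c5 * a t x)
    (heq1 : ∀ t x, deriv (fun s => u s x) t
      = ς1 * deriv (deriv (deriv (f t))) x - ς2 * deriv (deriv (a t)) x
        - 2 * u t x * deriv (f t) x - deriv (u t) x * f t x - v t x * deriv (a t) x)
    (heq2 : ∀ t x, deriv (fun s => v s x) t
      = ς2 * deriv (deriv (f t)) x - 2*ς3 * deriv (a t) x
        - deriv (fun y => v t y * f t y) x) :
    ∀ t₁ t₂ : ℝ,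
      (1/2) * ∫ x in (0:ℝ)..L, (u t₁ x * f t₁ x + v t₁ x * a t₁ x)
        = (1/2) * ∫ x in (0:ℝ)..L, (u t₂ x * f t₂ x + v t₂ x * a t₂ x) := by
  intro t₁ t₂
  have hfxsm : ContDiff ℝ (⊤ : ℕ∞) (pd (0,1) (Function.uncurry f)) := pd_contDiff hf _
  have hfxxsm : ContDiff ℝ (⊤ : ℕ∞) (pd (0,1) (pd (0,1) (Function.uncurry f))) :=
    pd_contDiff hfxsm _
  have haxsm : ContDiff ℝ (⊤ : ℕ∞) (pd (0,1) (Function.uncurry a)) := pd_contDiff ha _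
  -- spatial derivatives of f and a in terms of `pd`
  have hfx : ∀ t : ℝ, deriv (f t) = fun x => pd (0,1) (Function.uncurry f) (t,x) :=
    fun t => funext fun x => (hasDerivAt_pd1 hf t x).deriv
  have hfxx : ∀ t : ℝ, deriv (deriv (f t))
      = fun x => pd (0,1) (pd (0,1) (Function.uncurry f)) (t,x) := by
    intro t; rw [hfx t]
    exact funext fun x => (hasDerivAt_pd1 hfxsm t x).deriv
  have hfxxx : ∀ t : ℝ, deriv (deriv (deriv (f t)))
      = fun x => pd (0,1) (pd (0,1) (pd (0,1) (Function.uncurry f))) (t,x) := by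
    intro t; rw [hfxx t]
    exact funext fun x => (hasDerivAt_pd1 hfxxsm t x).deriv
  have hax : ∀ t : ℝ, deriv (a t) = fun x => pd (0,1) (Function.uncurry a) (t,x) :=
    fun t => funext fun x => (hasDerivAt_pd1 ha t x).deriv
  have haxx : ∀ t : ℝ, deriv (deriv (a t))
      = fun x => pd (0,1) (pd (0,1) (Function.uncurry a)) (t,x) := by
    intro t; rw [hax t]
    exact funext fun x => (hasDerivAt_pd1 haxsm t x).deriv
  -- u and v, uncurried
  have hUeq : Function.uncurry u = fun p : ℝ × ℝ =>
      c1 * Function.uncurry f p - c2 * pd (0,1) (pd (0,1) (Function.uncurry f)) p := by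
    funext p; obtain ⟨t, x⟩ := p
    simp only [Function.uncurry_apply_pair, hu, hfxx]
  have hUsm : ContDiff ℝ (⊤ : ℕ∞) (Function.uncurry u) := by
    rw [hUeq]
    exact (contDiff_const.mul hf).sub (contDiff_const.mul hfxxsm)
  have hVeq : Function.uncurry v = fun p : ℝ × ℝ => c5 * Function.uncurry a p := by
    funext p; obtain ⟨t, x⟩ := p
    simp only [Function.uncurry_apply_pair, hv]
  have hVsm : ContDiff ℝ (⊤ : ℕ∞) (Function.uncurry v) := by
    rw [hVeq]; exact contDiff_const.mul ha
  -- x-derivative of u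
  have hux : ∀ t : ℝ, deriv (u t) = fun x =>
      c1 * pd (0,1) (Function.uncurry f) (t,x)
        - c2 * pd (0,1) (pd (0,1) (pd (0,1) (Function.uncurry f))) (t,x) := by
    intro t
    funext y
    have hcu : u t = fun y => c1 * Function.uncurry f (t,y)
        - c2 * pd (0,1) (pd (0,1) (Function.uncurry f)) (t,y) :=
      funext fun y => congrFun hUeq (t,y)
    rw [hcu]
    exact (((hasDerivAt_pd1 hf t y).const_mul c1).sub
      ((hasDerivAt_pd1 hfxxsm t y).const_mul c2)).deriv
  -- periodicity, uncurried
  have perF : ∀ p : ℝ × ℝ, Function.uncurry f (p + (0, L)) = Function.uncurry f p := by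
    rintro ⟨t, x⟩
    show f (t + 0) (x + L) = f t x
    rw [add_zero]; exact hfp t x
  have perA : ∀ p : ℝ × ℝ, Function.uncurry a (p + (0, L)) = Function.uncurry a p := by
    rintro ⟨t, x⟩
    show a (t + 0) (x + L) = a t x
    rw [add_zero]; exact hap t x
  -- translated evolution equations
  have E1' : ∀ p : ℝ × ℝ,
      c1 * pd (1,0) (Function.uncurry f) p
        - c2 * pd (1,0) (pd (0,1) (pd (0,1) (Function.uncurry f))) p
       = ς1 * pd (0,1) (pd (0,1) (pd (0,1) (Function.uncurry f))) p
         - ς2 * pd (0,1) (pd (0,1) (Function.uncurry a)) p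
         - 2 * (c1 * Function.uncurry f p
             - c2 * pd (0,1) (pd (0,1) (Function.uncurry f)) p)
             * pd (0,1) (Function.uncurry f) p
         - (c1 * pd (0,1) (Function.uncurry f) p
             - c2 * pd (0,1) (pd (0,1) (pd (0,1) (Function.uncurry f))) p)
             * Function.uncurry f p
         - (c5 * Function.uncurry a p) * pd (0,1) (Function.uncurry a) p := by
    rintro ⟨t, x⟩
    have h0 : deriv (fun s => u s x) t = pd (1,0) (Function.uncurry u) (t,x) :=
      (hasDerivAt_pd0 hUsm t x).deriv
    have h1 : pd (1,0) (Function.uncurry u) (t,x)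
        = c1 * pd (1,0) (Function.uncurry f) (t,x)
          - c2 * pd (1,0) (pd (0,1) (pd (0,1) (Function.uncurry f))) (t,x) := by
      refine (hasDerivAt_pd0 hUsm t x).unique ?_
      rw [hUeq]
      exact ((hasDerivAt_pd0 hf t x).const_mul c1).sub
        ((hasDerivAt_pd0 hfxxsm t x).const_mul c2)
    have h2 := heq1 t x
    rw [h0, h1] at h2
    rw [hfxxx t, haxx t, hux t, hfx t, hax t] at h2
    rw [h2, hu, hv]
    simp only [hfxx, Function.uncurry_apply_pair]
  have E2' : ∀ p : ℝ × ℝ,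
      c5 * pd (1,0) (Function.uncurry a) p
       = ς2 * pd (0,1) (pd (0,1) (Function.uncurry f)) p
         - 2*ς3 * pd (0,1) (Function.uncurry a) p
         - ((c5 * pd (0,1) (Function.uncurry a) p) * Function.uncurry f p
             + (c5 * Function.uncurry a p) * pd (0,1) (Function.uncurry f) p) := by
    rintro ⟨t, x⟩
    have h0 : deriv (fun s => v s x) t = pd (1,0) (Function.uncurry v) (t,x) :=
      (hasDerivAt_pd0 hVsm t x).deriv
    have h1 : pd (1,0) (Function.uncurry v) (t,x)
        = c5 * pd (1,0) (Function.uncurry a) (t,x) := by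
      refine (hasDerivAt_pd0 hVsm t x).unique ?_
      rw [hVeq]
      exact (hasDerivAt_pd0 ha t x).const_mul c5
    have h3 : deriv (fun y => v t y * f t y) x
        = (c5 * pd (0,1) (Function.uncurry a) (t,x)) * Function.uncurry f (t,x)
          + (c5 * Function.uncurry a (t,x)) * pd (0,1) (Function.uncurry f) (t,x) := by
      have hcv : (fun y => v t y * f t y)
          = fun y => (c5 * Function.uncurry a (t,y)) * Function.uncurry f (t,y) := by
        funext y; simp only [hv, Function.uncurry_apply_pair]
      rw [hcv]
      exact (((hasDerivAt_pd1 ha t x).const_mul c5).mul (hasDerivAt_pd1 hf t x)).deriv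
    have h2 := heq2 t x
    rw [h0, h1, h3] at h2
    rw [h2]
    simp only [hfxx, hax, Function.uncurry_apply_pair]
  -- apply the main conservation lemma
  have hmain := NS4.main L hL c1 c2 c5 ς1 ς2 ς3
    (Function.uncurry f) (Function.uncurry a) hf ha perF perA E1' E2' t₁ t₂
  have hint_eq : ∀ t : ℝ,
      (∫ x in (0:ℝ)..L, (u t x * f t x + v t x * a t x))
      = ∫ x in (0:ℝ)..L,
          ((c1 * Function.uncurry f (t,x)
              - c2 * pd (0,1) (pd (0,1) (Function.uncurry f)) (t,x))
            * Function.uncurry f (t,x)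
          + (c5 * Function.uncurry a (t,x)) * Function.uncurry a (t,x)) := by
    intro t
    refine intervalIntegral.integral_congr fun x _ => ?_
    simp only [hu, hv, hfxx, Function.uncurry_apply_pair]
  rw [hint_eq t₁, hint_eq t₂, hmain]
end
end

section
/- Let L > 0 and let ς1, ς2, ς3 be real constants. For smooth L-periodic f, a, g, b : ℝ → ℝ define σ((f,a),(g,b)) = ∫₀ᴸ [ς1·f'·g'' + ς2·(f''·b − g''·a) + 2ς3·a·b'] dx, and define the bracket B((f,a),(g,b)) = (f·g' − f'·g, f·b' − a'·g). Then σ is antisymmetric, σ((f,a),(g,b)) = −σ((g,b),(f,a)), and satisfies the 2-cocycle identity: for all smooth L-periodic f, g, h, a, b, c, σ(B((f,a),(g,b)),(h,c)) + σ(B((g,b),(h,c)),(f,a)) + σ(B((h,c),(f,a)),(g,b)) = 0. (This expresses that ς1ω1 + ς2ω2 + ς3ω3 is a 2-cocycle on the bosonic subalgebra Vect(S¹) ⋉ C∞(S¹) of the generalized Neveu–Schwarz algebra, defining its three-dimensional central extension.) -/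
open scoped ContDiff

private lemma per_deriv' {u : ℝ → ℝ} {L : ℝ} (hp : Function.Periodic u L) :
    Function.Periodic (deriv u) L := by
  intro x
  have h1 : (fun y => u (y + L)) = u := funext fun y => hp y
  calc deriv u (x + L) = deriv (fun y => u (y + L)) x := (deriv_comp_add_const u L x).symm
    _ = deriv u x := by rw [h1]

private lemma int_per' {L : ℝ} {W W' : ℝ → ℝ} (hW : ∀ x, HasDerivAt W (W' x) x)
    (hc : Continuous W') (hp : Function.Periodic W L) :
    ∫ x in (0:ℝ)..L, W' x = 0 := by
  rw [intervalIntegral.integral_eq_sub_of_hasDerivAt (fun x _ => hW x)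
    (hc.intervalIntegrable _ _)]
  have h0 := hp 0
  simp only [zero_add] at h0
  rw [h0, sub_self]

private lemma derivs' {u : ℝ → ℝ} (hu : ContDiff ℝ (⊤ : ℕ∞) u) :
    Differentiable ℝ u ∧ Differentiable ℝ (deriv u) ∧ Differentiable ℝ (deriv (deriv u)) ∧
    Continuous (deriv (deriv (deriv u))) := by
  have h0 : ContDiff ℝ ∞ u := hu.of_le (by simp)
  have h1 := (contDiff_infty_iff_deriv.mp h0).2
  have h2 := (contDiff_infty_iff_deriv.mp h1).2
  have h3 := (contDiff_infty_iff_deriv.mp h2).2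
  exact ⟨(contDiff_infty_iff_deriv.mp h0).1, (contDiff_infty_iff_deriv.mp h1).1,
    (contDiff_infty_iff_deriv.mp h2).1, h3.continuous⟩

private lemma dsubmul' {u v w z : ℝ → ℝ} (hu : Differentiable ℝ u) (hv : Differentiable ℝ v)
    (hw : Differentiable ℝ w) (hz : Differentiable ℝ z) :
    deriv (fun x => u x * v x - w x * z x)
      = fun x => deriv u x * v x + u x * deriv v x - (deriv w x * z x + w x * deriv z x) :=
  funext fun x =>
    (((hu x).hasDerivAt.mul (hv x).hasDerivAt).sub
      ((hw x).hasDerivAt.mul (hz x).hasDerivAt)).deriv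

private lemma anti2' {L : ℝ} {A B W W' : ℝ → ℝ} (hA : Continuous A) (hB : Continuous B)
    (hW : ∀ x, HasDerivAt W (W' x) x) (hW' : Continuous W') (hp : Function.Periodic W L)
    (h : ∀ x, A x + B x = W' x) :
    ∫ x in (0:ℝ)..L, A x = -∫ x in (0:ℝ)..L, B x := by
  have h1 : ∫ x in (0:ℝ)..L, A x = ∫ x in (0:ℝ)..L, (W' x - B x) :=
    intervalIntegral.integral_congr fun x _ => by rw [← h x]; ring
  rw [h1, intervalIntegral.integral_sub (hW'.intervalIntegrable _ _)
    (hB.intervalIntegrable _ _), int_per' hW hW' hp, zero_sub]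

private lemma sum3' {L : ℝ} {A B C W W' : ℝ → ℝ} (hA : Continuous A) (hB : Continuous B)
    (hC : Continuous C) (hW : ∀ x, HasDerivAt W (W' x) x) (hW' : Continuous W')
    (hp : Function.Periodic W L) (h : ∀ x, A x + B x + C x = W' x) :
    (∫ x in (0:ℝ)..L, A x) + (∫ x in (0:ℝ)..L, B x) + (∫ x in (0:ℝ)..L, C x) = 0 := by
  rw [← intervalIntegral.integral_add (hA.intervalIntegrable _ _) (hB.intervalIntegrable _ _),
    ← intervalIntegral.integral_add (f := fun x => A x + B x) ((hA.add hB).intervalIntegrable _ _)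
      (hC.intervalIntegrable _ _),
    intervalIntegral.integral_congr (g := W') fun x _ => h x,
    int_per' hW hW' hp]

/-- `σ = ς1 ω1 + ς2 ω2 + ς3 ω3` is an antisymmetric 2-cocycle on the
bosonic subalgebra `Vect(S¹) ⋉ C∞(S¹)` of the generalized Neveu–Schwarz algebra
with bracket `B((f,a),(g,b)) = (f g' − f' g, f b' − a' g)`. -/
theorem statement_10 (L : ℝ) (hL : 0 < L) (ς1 ς2 ς3 : ℝ)
    (σ : ((ℝ → ℝ) × (ℝ → ℝ)) → ((ℝ → ℝ) × (ℝ → ℝ)) → ℝ)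
    (hσ : σ = fun F G => ∫ x in (0:ℝ)..L,
      (ς1 * deriv F.1 x * deriv (deriv G.1) x
        + ς2 * (deriv (deriv F.1) x * G.2 x - deriv (deriv G.1) x * F.2 x)
        + 2*ς3 * F.2 x * deriv G.2 x))
    (B : ((ℝ → ℝ) × (ℝ → ℝ)) → ((ℝ → ℝ) × (ℝ → ℝ)) → ((ℝ → ℝ) × (ℝ → ℝ)))
    (hB : B = fun F G =>
      (fun x => F.1 x * deriv G.1 x - deriv F.1 x * G.1 x,
       fun x => F.1 x * deriv G.2 x - deriv F.2 x * G.1 x)) :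
    (∀ f a g b : ℝ → ℝ,
      ContDiff ℝ (⊤ : ℕ∞) f → ContDiff ℝ (⊤ : ℕ∞) a → ContDiff ℝ (⊤ : ℕ∞) g → ContDiff ℝ (⊤ : ℕ∞) b →
      Function.Periodic f L → Function.Periodic a L →
      Function.Periodic g L → Function.Periodic b L →
      σ (f, a) (g, b) = -σ (g, b) (f, a))
    ∧ (∀ f g h a b c : ℝ → ℝ,
      ContDiff ℝ (⊤ : ℕ∞) f → ContDiff ℝ (⊤ : ℕ∞) g → ContDiff ℝ (⊤ : ℕ∞) h →
      ContDiff ℝ (⊤ : ℕ∞) a → ContDiff ℝ (⊤ : ℕ∞) b → ContDiff ℝ (⊤ : ℕ∞) c →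
      Function.Periodic f L → Function.Periodic g L → Function.Periodic h L →
      Function.Periodic a L → Function.Periodic b L → Function.Periodic c L →
      σ (B (f, a) (g, b)) (h, c) + σ (B (g, b) (h, c)) (f, a)
        + σ (B (h, c) (f, a)) (g, b) = 0) := by
  subst hσ hB
  constructor
  · -- antisymmetry
    intro f a g b hf ha hg hb hpf hpa hpg hpb
    obtain ⟨df0, df1, df2, cf3⟩ := derivs' hf
    obtain ⟨da0, da1, da2, ca3⟩ := derivs' ha
    obtain ⟨dg0, dg1, dg2, cg3⟩ := derivs' hg
    obtain ⟨db0, db1, db2, cb3⟩ := derivs' hb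
    have cf0 := df0.continuous; have cf1 := df1.continuous; have cf2 := df2.continuous
    have ca0 := da0.continuous; have ca1 := da1.continuous
    have cg0 := dg0.continuous; have cg1 := dg1.continuous; have cg2 := dg2.continuous
    have cb0 := db0.continuous; have cb1 := db1.continuous
    have epf1 : ∀ t, deriv f (t + L) = deriv f t := per_deriv' hpf
    have epg1 : ∀ t, deriv g (t + L) = deriv g t := per_deriv' hpg
    have epa : ∀ t, a (t + L) = a t := hpa
    have epb : ∀ t, b (t + L) = b t := hpb
    simp only
    refine anti2' ?_ ?_
      (fun x => (HasDerivAt.const_mul ς1 ((df1 x).hasDerivAt.mul (dg1 x).hasDerivAt)).add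
        (HasDerivAt.const_mul (2*ς3) ((da0 x).hasDerivAt.mul (db0 x).hasDerivAt)))
      ?_ ?_ ?_
    · fun_prop
    · fun_prop
    · fun_prop
    · intro x; simp only [Pi.add_apply, Pi.mul_apply, Pi.sub_apply, epf1, epg1, epa, epb]
    · intro x; ring
  · -- cocycle identity
    intro f g h a b c hf hg hh ha hb hc hpf hpg hph hpa hpb hpc
    obtain ⟨df0, df1, df2, cf3⟩ := derivs' hf
    obtain ⟨dg0, dg1, dg2, cg3⟩ := derivs' hg
    obtain ⟨dh0, dh1, dh2, ch3⟩ := derivs' hh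
    obtain ⟨da0, da1, da2, ca3⟩ := derivs' ha
    obtain ⟨db0, db1, db2, cb3⟩ := derivs' hb
    obtain ⟨dc0, dc1, dc2, cc3⟩ := derivs' hc
    have cf0 := df0.continuous; have cf1 := df1.continuous; have cf2 := df2.continuous
    have cg0 := dg0.continuous; have cg1 := dg1.continuous; have cg2 := dg2.continuous
    have ch0 := dh0.continuous; have ch1 := dh1.continuous; have ch2 := dh2.continuous
    have ca0 := da0.continuous; have ca1 := da1.continuous
    have cb0 := db0.continuous; have cb1 := db1.continuous
    have cc0 := dc0.continuous; have cc1 := dc1.continuous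
    have epf : ∀ t, f (t + L) = f t := hpf
    have epg : ∀ t, g (t + L) = g t := hpg
    have eph : ∀ t, h (t + L) = h t := hph
    have epa : ∀ t, a (t + L) = a t := hpa
    have epb : ∀ t, b (t + L) = b t := hpb
    have epc : ∀ t, c (t + L) = c t := hpc
    have epf2 : ∀ t, deriv (deriv f) (t + L) = deriv (deriv f) t :=
      per_deriv' (per_deriv' hpf)
    have epg2 : ∀ t, deriv (deriv g) (t + L) = deriv (deriv g) t :=
      per_deriv' (per_deriv' hpg)
    have eph2 : ∀ t, deriv (deriv h) (t + L) = deriv (deriv h) t :=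
      per_deriv' (per_deriv' hph)
    have r1fg : deriv (fun x => f x * deriv g x - deriv f x * g x)
        = fun x => f x * deriv (deriv g) x - deriv (deriv f) x * g x := by
      rw [dsubmul' df0 dg1 df1 dg0]; funext x; ring
    have r1gh : deriv (fun x => g x * deriv h x - deriv g x * h x)
        = fun x => g x * deriv (deriv h) x - deriv (deriv g) x * h x := by
      rw [dsubmul' dg0 dh1 dg1 dh0]; funext x; ring
    have r1hf : deriv (fun x => h x * deriv f x - deriv h x * f x)
        = fun x => h x * deriv (deriv f) x - deriv (deriv h) x * f x := by
      rw [dsubmul' dh0 df1 dh1 df0]; funext x; ring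
    have r2fg := dsubmul' df0 dg2 df2 dg0
    have r2gh := dsubmul' dg0 dh2 dg2 dh0
    have r2hf := dsubmul' dh0 df2 dh2 df0
    simp only [r1fg, r1gh, r1hf, r2fg, r2gh, r2hf]
    refine sum3' ?_ ?_ ?_
      (fun x => HasDerivAt.const_mul ς2
        ((((da0 x).hasDerivAt.mul
            (((dg0 x).hasDerivAt.mul (dh2 x).hasDerivAt).sub
             ((dg2 x).hasDerivAt.mul (dh0 x).hasDerivAt))).add
          ((db0 x).hasDerivAt.mul
            (((dh0 x).hasDerivAt.mul (df2 x).hasDerivAt).sub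
             ((dh2 x).hasDerivAt.mul (df0 x).hasDerivAt)))).add
         ((dc0 x).hasDerivAt.mul
            (((df0 x).hasDerivAt.mul (dg2 x).hasDerivAt).sub
             ((df2 x).hasDerivAt.mul (dg0 x).hasDerivAt)))))
      ?_ ?_ ?_
    · fun_prop
    · fun_prop
    · fun_prop
    · fun_prop
    · intro x; simp only [Pi.add_apply, Pi.mul_apply, Pi.sub_apply, epf, epg, eph, epa, epb, epc, epf2, epg2, eph2]
    · intro x; simp only [Pi.mul_apply, Pi.sub_apply]; ring
end

section
/- Let L > 0 and let ς1, ς2, ς3 be real constants. Let f, a : ℝ × ℝ → ℝ be smooth functions of (t,x), L-periodic in x for every t, satisfying for all (t,x) the three-parameter two-component KdV system: f_t = ς1·f_xxx − ς2·a_xx − 3·f·f_x − a·a_x and a_t = ς2·f_xx − 2ς3·a_x − (a·f)_x. Then t ↦ (1/2)∫₀ᴸ [f(t,x)² + a(t,x)²] dx is constant in t. (This system is the bosonic reduction of the Kuper-2KdV equation (4.5), obtained from the Euler equation for the L²-type metric M_{1,0,1/4,0,1,−1}; for ς1 ≠ 0, ς2 = ς3 = 0 it is the Ito equation.) -/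
open MeasureTheory Set Function intervalIntegral
open scoped ContDiff

/-- The derivative of a periodic function is periodic. -/
lemma periodic_deriv_aux {g : ℝ → ℝ} {L : ℝ} (h : Function.Periodic g L) :
    Function.Periodic (deriv g) L := by
  intro x
  have hg : (fun y => g (y + L)) = g := funext h
  calc deriv g (x + L) = deriv (fun y => g (y + L)) x := (deriv_comp_add_const g L x).symm
    _ = deriv g x := by rw [hg]

/-- Conservation of the energy `H1 = (1/2)∫ (f² + a²) dx` for the
three-parameter two-component KdV system (bosonic reduction of the Kuper-2KdV
equation (4.5), Euler equation for the L²-type metric `M_{1,0,1/4,0,1,−1}`). -/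
theorem statement_11 (L : ℝ) (hL : 0 < L) (ς1 ς2 ς3 : ℝ)
    (f a : ℝ → ℝ → ℝ)
    (hf : ContDiff ℝ (⊤ : ℕ∞) (Function.uncurry f)) (ha : ContDiff ℝ (⊤ : ℕ∞) (Function.uncurry a))
    (hfp : ∀ t, Function.Periodic (f t) L) (hap : ∀ t, Function.Periodic (a t) L)
    (heq1 : ∀ t x, deriv (fun s => f s x) t
      = ς1 * deriv (deriv (deriv (f t))) x - ς2 * deriv (deriv (a t)) x
        - 3 * f t x * deriv (f t) x - a t x * deriv (a t) x)
    (heq2 : ∀ t x, deriv (fun s => a s x) t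
      = ς2 * deriv (deriv (f t)) x - 2*ς3 * deriv (a t) x
        - deriv (fun y => a t y * f t y) x) :
    ∀ t₁ t₂ : ℝ,
      (1/2) * ∫ x in (0:ℝ)..L, ((f t₁ x)^2 + (a t₁ x)^2)
        = (1/2) * ∫ x in (0:ℝ)..L, ((f t₂ x)^2 + (a t₂ x)^2) := by
  intro t₁ t₂
  -- abbreviations
  set u : ℝ × ℝ → ℝ := Function.uncurry f with hu_def
  set v : ℝ × ℝ → ℝ := Function.uncurry a with hv_def
  -- smoothness of the spatial slices
  have hone : (1 : WithTop ℕ∞) ≤ ∞ := by exact_mod_cast le_top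
  have hslice : ∀ (w : ℝ × ℝ → ℝ), ContDiff ℝ ∞ w → ∀ t : ℝ,
      ContDiff ℝ ∞ (fun x => w (t, x)) := fun w hw t =>
    hw.comp (contDiff_const.prodMk contDiff_id)
  have hft : ∀ t, ContDiff ℝ ∞ (f t) := fun t => hslice u (hf.of_le (by simp)) t
  have hat : ∀ t, ContDiff ℝ ∞ (a t) := fun t => hslice v (ha.of_le (by simp)) t
  have hder : ∀ (g : ℝ → ℝ), ContDiff ℝ ∞ g → ContDiff ℝ ∞ (deriv g) :=
    fun g hg => (contDiff_infty_iff_deriv.mp hg).2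
  -- time derivatives
  have hFt : ∀ (w : ℝ × ℝ → ℝ), ContDiff ℝ (⊤ : ℕ∞) w → ∀ (t x : ℝ),
      HasDerivAt (fun s => w (s, x)) (fderiv ℝ w (t, x) (1, 0)) t := by
    intro w hw t x
    have h1 : HasFDerivAt w (fderiv ℝ w (t, x)) (t, x) :=
      (hw.differentiable (by simp) (t, x)).hasFDerivAt
    have h2 : HasDerivAt (fun s : ℝ => (s, x)) ((1 : ℝ), (0 : ℝ)) t :=
      (hasDerivAt_id t).prodMk (hasDerivAt_const t x)
    exact h1.comp_hasDerivAt t h2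
  -- continuity of the (partial-t) derivative fields
  have hcont_fd : ∀ (w : ℝ × ℝ → ℝ), ContDiff ℝ (⊤ : ℕ∞) w →
      Continuous (fun p : ℝ × ℝ => fderiv ℝ w p (1, 0)) := by
    intro w hw
    have h := (hw.fderiv_right (m := 0) (by simp)).continuous
    exact h.clm_apply continuous_const
  -- the time derivative of the energy density
  set Fd : ℝ × ℝ → ℝ := fun p =>
    2 * u p * fderiv ℝ u p (1, 0) + 2 * v p * fderiv ℝ v p (1, 0) with hFd_def
  have hFdcont : Continuous Fd := by
    refine (((continuous_const.mul hf.continuous).mul (hcont_fd u hf)).add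
      ((continuous_const.mul ha.continuous).mul (hcont_fd v ha)))
  have hdens : ∀ (s x : ℝ),
      HasDerivAt (fun s' => (f s' x)^2 + (a s' x)^2) (Fd (s, x)) s := by
    intro s x
    have h1 := (hFt u hf s x).pow 2
    have h2 := (hFt v ha s x).pow 2
    have h3 := h1.add h2
    refine h3.congr_deriv ?_
    simp [hFd_def, hu_def, hv_def, Function.uncurry]
  -- the energy functional
  set E : ℝ → ℝ := fun s => ∫ x in (0:ℝ)..L, ((f s x)^2 + (a s x)^2) with hE_def
  -- differentiation under the integral sign
  have hE' : ∀ t : ℝ, HasDerivAt E (∫ x in (0:ℝ)..L, Fd (t, x)) t := by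
    intro t
    obtain ⟨M, hM⟩ := ((isCompact_Icc (a := t - 1) (b := t + 1)).prod
      (isCompact_Icc (a := min 0 L) (b := max 0 L))).exists_bound_of_continuousOn
      hFdcont.continuousOn
    have key := intervalIntegral.hasDerivAt_integral_of_dominated_loc_of_deriv_le
      (F := fun s x => (f s x)^2 + (a s x)^2) (F' := fun s x => Fd (s, x))
      (x₀ := t) (a := 0) (b := L) (μ := volume) (bound := fun _ => M)
      (s := Metric.ball t 1) (Metric.ball_mem_nhds t one_pos)
      (Filter.Eventually.of_forall (fun s =>
        (((hft s).continuous.pow 2).add ((hat s).continuous.pow 2)).aestronglyMeasurable))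
      ((((hft t).continuous.pow 2).add ((hat t).continuous.pow 2)).intervalIntegrable 0 L)
      ((hFdcont.comp (continuous_const.prodMk continuous_id)).aestronglyMeasurable)
      ?_ (intervalIntegrable_const) ?_
    · exact key.2
    · refine Filter.Eventually.of_forall (fun x hx s hs => ?_)
      refine hM (s, x) ⟨?_, ?_⟩
      · rw [Metric.mem_ball, Real.dist_eq] at hs
        constructor <;> [linarith [abs_lt.mp hs |>.1]; linarith [abs_lt.mp hs |>.2]]
      · rw [Set.mem_uIoc] at hx
        rcases hx with h | h
        · exact ⟨by simpa [min_le_iff] using Or.inl h.1.le, by simpa [le_max_iff] using Or.inr h.2⟩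
        · exact ⟨by simpa [min_le_iff] using Or.inr h.1.le, by simpa [le_max_iff] using Or.inl h.2⟩
    · exact Filter.Eventually.of_forall (fun x _ s _ => hdens s x)
  -- the spatial integral of the time derivative vanishes (conservation law)
  have hspace : ∀ t : ℝ, ∫ x in (0:ℝ)..L, Fd (t, x) = 0 := by
    intro t
    set G : ℝ → ℝ := fun y =>
      2*ς1*(f t y * deriv (deriv (f t)) y - (deriv (f t) y)^2/2)
      - 2*ς2*(f t y * deriv (a t) y - a t y * deriv (f t) y)
      - 2*(f t y)^3 - 2*ς3*(a t y)^2 - 2*((a t y)^2 * f t y) with hG_def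
    have hf1 := hder _ (hft t)
    have hf2 := hder _ hf1
    have ha1 := hder _ (hat t)
    have hkey : ∀ x : ℝ, HasDerivAt G (Fd (t, x)) x := by
      intro x
      have H0 : HasDerivAt (f t) (deriv (f t) x) x :=
        ((hft t).differentiable (by simp) x).hasDerivAt
      have H1 : HasDerivAt (deriv (f t)) (deriv (deriv (f t)) x) x :=
        (hf1.differentiable (by simp) x).hasDerivAt
      have H2 : HasDerivAt (deriv (deriv (f t))) (deriv (deriv (deriv (f t))) x) x :=
        (hf2.differentiable (by simp) x).hasDerivAt
      have A0 : HasDerivAt (a t) (deriv (a t) x) x :=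
        ((hat t).differentiable (by simp) x).hasDerivAt
      have A1 : HasDerivAt (deriv (a t)) (deriv (deriv (a t)) x) x :=
        (ha1.differentiable (by simp) x).hasDerivAt
      have termA := ((H0.mul H2).sub ((H1.pow 2).div_const 2)).const_mul (2*ς1)
      have termB := ((H0.mul A1).sub (A0.mul H1)).const_mul (2*ς2)
      have termC := (H0.pow 3).const_mul 2
      have termD := (A0.pow 2).const_mul (2*ς3)
      have termE := ((A0.pow 2).mul H0).const_mul 2
      have hD := (((termA.sub termB).sub termC).sub termD).sub termE
      refine hD.congr_deriv ?_
      -- identify Fd (t,x) using the evolution equations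
      have e1 : fderiv ℝ u (t, x) (1, 0) = deriv (fun s => f s x) t :=
        ((hFt u hf t x).deriv).symm
      have e2 : fderiv ℝ v (t, x) (1, 0) = deriv (fun s => a s x) t :=
        ((hFt v ha t x).deriv).symm
      have e3 : deriv (fun y => a t y * f t y) x
          = deriv (a t) x * f t x + a t x * deriv (f t) x := (A0.mul H0).deriv
      have hFdval : Fd (t, x) = 2 * f t x * deriv (fun s => f s x) t
          + 2 * a t x * deriv (fun s => a s x) t := by
        simp [hFd_def, e1, e2]
        rfl
      rw [hFdval, heq1 t x, heq2 t x, e3]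
      simp only [Pi.pow_apply]
      ring
    have hint : ∫ x in (0:ℝ)..L, Fd (t, x) = G L - G 0 := by
      refine intervalIntegral.integral_eq_sub_of_hasDerivAt (fun x _ => hkey x) ?_
      exact (hFdcont.comp (continuous_const.prodMk continuous_id)).intervalIntegrable 0 L
    rw [hint]
    have hGper : Function.Periodic G L := by
      intro y
      simp only [hG_def, hfp t y, hap t y, periodic_deriv_aux (hfp t) y,
        periodic_deriv_aux (hap t) y, periodic_deriv_aux (periodic_deriv_aux (hfp t)) y,
        periodic_deriv_aux (periodic_deriv_aux (hap t)) y]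
    have : G L = G 0 := by simpa using hGper 0
    rw [this, sub_self]
  -- E has zero derivative, hence is constant
  have hEderiv : ∀ t : ℝ, HasDerivAt E 0 t := fun t => hspace t ▸ hE' t
  have hconst : E t₁ = E t₂ :=
    is_const_of_deriv_eq_zero (fun t => (hEderiv t).differentiableAt)
      (fun t => (hEderiv t).deriv) t₁ t₂
  simpa [hE_def] using congrArg (fun z => (1/2 : ℝ) * z) hconst
end

section
/- Let L > 0 and let ς1, ς2, ς3 be real constants. Let f, a : ℝ × ℝ → ℝ be smooth functions of (t,x), L-periodic in x for every t, satisfying for all (t,x): f_t − f_xxt = ς1·f_xxx − ς2·a_xx − 3·f·f_x + 2·f_x·f_xx + f·f_xxx − a·a_x and a_t = ς2·f_xx − 2ς3·a_x − (a·f)_x. Then t ↦ (1/2)∫₀ᴸ [f(t,x)² + f_x(t,x)² + a(t,x)²] dx is constant in t. (For ς1 = ς2 = ς3 = 0 this system is the two-component Camassa–Holm equation; the conserved quantity is the H¹-type energy Hamiltonian H1.) -/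
open Function MeasureTheory intervalIntegral Metric Set

noncomputable section S12aux

namespace S12

/-- partial derivative in the second (space) variable -/
def Dx (F : ℝ → ℝ → ℝ) : ℝ → ℝ → ℝ := fun t x => deriv (F t) x

/-- partial derivative in the first (time) variable -/
def Dt (F : ℝ → ℝ → ℝ) : ℝ → ℝ → ℝ := fun t x => deriv (fun s => F s x) t

variable {F : ℝ → ℝ → ℝ}

lemma hasDerivAt_x (hF : ContDiff ℝ (⊤ : ℕ∞) (uncurry F)) (t x : ℝ) :
    HasDerivAt (F t) (fderiv ℝ (uncurry F) (t, x) (0, 1)) x := by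
  have h1 : HasDerivAt (fun y : ℝ => ((t : ℝ), y)) ((0 : ℝ), (1 : ℝ)) x :=
    (hasDerivAt_const x t).prodMk (hasDerivAt_id x)
  have h2 := (hF.differentiable (by simp) (t, x)).hasFDerivAt
  exact h2.comp_hasDerivAt x h1

lemma hasDerivAt_t (hF : ContDiff ℝ (⊤ : ℕ∞) (uncurry F)) (t x : ℝ) :
    HasDerivAt (fun s => F s x) (fderiv ℝ (uncurry F) (t, x) (1, 0)) t := by
  have h1 : HasDerivAt (fun s : ℝ => (s, (x : ℝ))) ((1 : ℝ), (0 : ℝ)) t :=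
    (hasDerivAt_id t).prodMk (hasDerivAt_const t x)
  have h2 := (hF.differentiable (by simp) (t, x)).hasFDerivAt
  exact h2.comp_hasDerivAt t h1

lemma deriv_x_eq (hF : ContDiff ℝ (⊤ : ℕ∞) (uncurry F)) (t x : ℝ) :
    deriv (F t) x = fderiv ℝ (uncurry F) (t, x) (0, 1) := (hasDerivAt_x hF t x).deriv

lemma deriv_t_eq (hF : ContDiff ℝ (⊤ : ℕ∞) (uncurry F)) (t x : ℝ) :
    deriv (fun s => F s x) t = fderiv ℝ (uncurry F) (t, x) (1, 0) := (hasDerivAt_t hF t x).deriv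

lemma smooth_fderiv_apply (hF : ContDiff ℝ (⊤ : ℕ∞) (uncurry F)) (v : ℝ × ℝ) :
    ContDiff ℝ (⊤ : ℕ∞) (fun p : ℝ × ℝ => fderiv ℝ (uncurry F) p v) :=
  (ContinuousLinearMap.apply ℝ ℝ v).contDiff.comp (hF.fderiv_right (by simp))

lemma smooth_Dx (hF : ContDiff ℝ (⊤ : ℕ∞) (uncurry F)) :
    ContDiff ℝ (⊤ : ℕ∞) (uncurry (Dx F)) := by
  have h : (uncurry (Dx F)) = fun p : ℝ × ℝ => fderiv ℝ (uncurry F) p (0, 1) := by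
    funext p; exact deriv_x_eq hF p.1 p.2
  rw [h]; exact smooth_fderiv_apply hF _

lemma smooth_Dt (hF : ContDiff ℝ (⊤ : ℕ∞) (uncurry F)) :
    ContDiff ℝ (⊤ : ℕ∞) (uncurry (Dt F)) := by
  have h : (uncurry (Dt F)) = fun p : ℝ × ℝ => fderiv ℝ (uncurry F) p (1, 0) := by
    funext p; exact deriv_t_eq hF p.1 p.2
  rw [h]; exact smooth_fderiv_apply hF _

lemma hasDerivAt_Dx (hF : ContDiff ℝ (⊤ : ℕ∞) (uncurry F)) (t x : ℝ) :
    HasDerivAt (F t) (Dx F t x) x := (hasDerivAt_x hF t x).differentiableAt.hasDerivAt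

lemma hasDerivAt_Dt (hF : ContDiff ℝ (⊤ : ℕ∞) (uncurry F)) (t x : ℝ) :
    HasDerivAt (fun s => F s x) (Dt F t x) t := (hasDerivAt_t hF t x).differentiableAt.hasDerivAt

lemma clairaut (hF : ContDiff ℝ (⊤ : ℕ∞) (uncurry F)) (t x : ℝ) :
    Dx (Dt F) t x = Dt (Dx F) t x := by
  show deriv (fun y => deriv (fun s => F s y) t) x = deriv (fun s => deriv (F s) x) t
  set Φ := fderiv ℝ (uncurry F) with hΦ
  have hΦdiff : Differentiable ℝ Φ := (hF.fderiv_right (m := (⊤ : ℕ∞)) (by simp)).differentiable (by simp)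
  have hsym := second_derivative_symmetric (f := uncurry F) (f' := Φ)
    (f'' := fderiv ℝ Φ (t, x)) (fun p => (hF.differentiable (by simp) p).hasFDerivAt)
    (hΦdiff (t, x)).hasFDerivAt
  have hL : HasDerivAt (fun y => deriv (fun s => F s y) t)
      (fderiv ℝ Φ (t, x) (0, 1) (1, 0)) x := by
    have h1 : HasDerivAt (fun y : ℝ => ((t : ℝ), y)) ((0 : ℝ), (1 : ℝ)) x :=
      (hasDerivAt_const x t).prodMk (hasDerivAt_id x)
    have h2 : HasFDerivAt (fun p : ℝ × ℝ => Φ p ((1 : ℝ), (0 : ℝ)))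
        ((ContinuousLinearMap.apply ℝ ℝ ((1 : ℝ), (0 : ℝ))).comp (fderiv ℝ Φ (t, x))) (t, x) :=
      (ContinuousLinearMap.apply ℝ ℝ ((1 : ℝ), (0 : ℝ))).hasFDerivAt.comp _
        (hΦdiff (t, x)).hasFDerivAt
    have h3 := h2.comp_hasDerivAt x h1
    have heq : (fun y => Φ (t, y) ((1 : ℝ), (0 : ℝ))) = fun y => deriv (fun s => F s y) t := by
      funext y; exact (deriv_t_eq hF t y).symm
    rw [← heq]; exact h3
  have hR : HasDerivAt (fun s => deriv (F s) x)
      (fderiv ℝ Φ (t, x) (1, 0) (0, 1)) t := by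
    have h1 : HasDerivAt (fun s : ℝ => (s, (x : ℝ))) ((1 : ℝ), (0 : ℝ)) t :=
      (hasDerivAt_id t).prodMk (hasDerivAt_const t x)
    have h2 : HasFDerivAt (fun p : ℝ × ℝ => Φ p ((0 : ℝ), (1 : ℝ)))
        ((ContinuousLinearMap.apply ℝ ℝ ((0 : ℝ), (1 : ℝ))).comp (fderiv ℝ Φ (t, x))) (t, x) :=
      (ContinuousLinearMap.apply ℝ ℝ ((0 : ℝ), (1 : ℝ))).hasFDerivAt.comp _
        (hΦdiff (t, x)).hasFDerivAt
    have h3 := h2.comp_hasDerivAt t h1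
    have heq : (fun s => Φ (s, x) ((0 : ℝ), (1 : ℝ))) = fun s => deriv (F s) x := by
      funext s; exact (deriv_x_eq hF s x).symm
    rw [← heq]; exact h3
  rw [hL.deriv, hR.deriv]
  exact hsym _ _

lemma cont_slice {G : ℝ → ℝ → ℝ} (hG : Continuous (uncurry G)) (t : ℝ) : Continuous (G t) :=
  hG.comp (Continuous.prodMk_right t)

lemma periodic_deriv {g : ℝ → ℝ} {L : ℝ} (hp : Function.Periodic g L) :
    Function.Periodic (deriv g) L := by
  intro x
  have h1 : deriv (fun y => g (y + L)) x = deriv g (x + L) := deriv_comp_add_const g L x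
  have h2 : (fun y => g (y + L)) = g := funext fun y => hp y
  rw [h2] at h1
  exact h1.symm

lemma periodic_Dx {L : ℝ} (hp : ∀ t, Function.Periodic (F t) L) (t : ℝ) :
    Function.Periodic (Dx F t) L := periodic_deriv (hp t)

lemma periodic_Dt {L : ℝ} (hp : ∀ t, Function.Periodic (F t) L) (t : ℝ) :
    Function.Periodic (Dt F t) L := by
  intro x
  show deriv (fun s => F s (x + L)) t = deriv (fun s => F s x) t
  have h : (fun s => F s (x + L)) = fun s => F s x := funext fun s => hp s x
  rw [h]

lemma hasDerivAt_param_integral (hF : ContDiff ℝ (⊤ : ℕ∞) (uncurry F)) (L t₀ : ℝ) :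
    HasDerivAt (fun t => ∫ x in (0:ℝ)..L, F t x)
      (∫ x in (0:ℝ)..L, Dt F t₀ x) t₀ := by
  have hF'cont : Continuous (uncurry (Dt F)) := (smooth_Dt hF).continuous
  set K : Set (ℝ × ℝ) := Icc (t₀ - 1) (t₀ + 1) ×ˢ uIcc (0:ℝ) L with hK
  have hKcomp : IsCompact K := isCompact_Icc.prod isCompact_uIcc
  obtain ⟨C, hC⟩ := hKcomp.exists_bound_of_continuousOn hF'cont.continuousOn
  have main := intervalIntegral.hasDerivAt_integral_of_dominated_loc_of_deriv_le
    (F := F) (F' := Dt F) (x₀ := t₀) (a := 0) (b := L) (μ := volume)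
    (bound := fun _ => C) (s := ball t₀ 1) (ball_mem_nhds t₀ one_pos)
    (Filter.Eventually.of_forall fun t => (cont_slice hF.continuous t).aestronglyMeasurable)
    ((cont_slice hF.continuous t₀).intervalIntegrable 0 L)
    (cont_slice hF'cont t₀).aestronglyMeasurable
    (Filter.Eventually.of_forall fun x hx t ht => by
      have hmem : (t, x) ∈ K := by
        constructor
        · have : t ∈ Ioo (t₀ - 1) (t₀ + 1) := by rwa [← Real.ball_eq_Ioo]
          exact Ioc_subset_Icc_self (Ioo_subset_Ioc_self this)
        · exact Ioc_subset_Icc_self hx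
      simpa using hC (t, x) hmem)
    (intervalIntegrable_const)
    (Filter.Eventually.of_forall fun x _ t _ => hasDerivAt_Dt hF t x)
  exact main.2

end S12

end S12aux


open S12 in

/-- Conservation of the H¹-type energy `H1 = (1/2)∫ (f² + f_x² + a²) dx`
for the bosonic reduction of the Kuper-2CH equation (4.6); for
`ς1 = ς2 = ς3 = 0` this is the two-component Camassa–Holm equation. -/
theorem statement_12 (L : ℝ) (hL : 0 < L) (ς1 ς2 ς3 : ℝ)
    (f a : ℝ → ℝ → ℝ)
    (hf : ContDiff ℝ (⊤ : ℕ∞) (Function.uncurry f)) (ha : ContDiff ℝ (⊤ : ℕ∞) (Function.uncurry a))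
    (hfp : ∀ t, Function.Periodic (f t) L) (hap : ∀ t, Function.Periodic (a t) L)
    (heq1 : ∀ t x, deriv (fun s => f s x) t - deriv (fun s => deriv (deriv (f s)) x) t
      = ς1 * deriv (deriv (deriv (f t))) x - ς2 * deriv (deriv (a t)) x
        - 3 * f t x * deriv (f t) x
        + 2 * deriv (f t) x * deriv (deriv (f t)) x
        + f t x * deriv (deriv (deriv (f t))) x
        - a t x * deriv (a t) x)
    (heq2 : ∀ t x, deriv (fun s => a s x) t
      = ς2 * deriv (deriv (f t)) x - 2*ς3 * deriv (a t) x
        - deriv (fun y => a t y * f t y) x) :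
    ∀ t₁ t₂ : ℝ,
      (1/2) * ∫ x in (0:ℝ)..L, ((f t₁ x)^2 + (deriv (f t₁) x)^2 + (a t₁ x)^2)
        = (1/2) * ∫ x in (0:ℝ)..L, ((f t₂ x)^2 + (deriv (f t₂) x)^2 + (a t₂ x)^2) := by
  intro t₁ t₂
  have hfx := smooth_Dx hf
  have hfxx := smooth_Dx hfx
  have hax := smooth_Dx ha
  -- Step 2: the spatial integral of the time-derivative density vanishes
  have step2 : ∀ t : ℝ, (∫ x in (0:ℝ)..L,
      (f t x * Dt f t x + Dx f t x * Dt (Dx f) t x + a t x * Dt a t x)) = 0 := by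
    intro t
    have hdf : ∀ x, HasDerivAt (f t) (Dx f t x) x := hasDerivAt_Dx hf t
    have hdfx : ∀ x, HasDerivAt (Dx f t) (Dx (Dx f) t x) x := hasDerivAt_Dx hfx t
    have hdfxx : ∀ x, HasDerivAt (Dx (Dx f) t) (Dx (Dx (Dx f)) t x) x := hasDerivAt_Dx hfxx t
    have hda : ∀ x, HasDerivAt (a t) (Dx a t x) x := hasDerivAt_Dx ha t
    have hdax : ∀ x, HasDerivAt (Dx a t) (Dx (Dx a) t x) x := hasDerivAt_Dx hax t
    have hdfxt : ∀ x, HasDerivAt (Dt (Dx f) t) (Dt (Dx (Dx f)) t x) x := fun x => by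
      have h := hasDerivAt_Dx (smooth_Dt hfx) t x
      rwa [clairaut hfx t x] at h
    obtain ⟨g, hg, hper⟩ : ∃ g : ℝ → ℝ,
        (∀ x, HasDerivAt g
          (f t x * Dt f t x + Dx f t x * Dt (Dx f) t x + a t x * Dt a t x) x)
        ∧ g L = g 0 := by
      refine ⟨fun x =>
        f t x * Dt (Dx f) t x + ς1 * (f t x * Dx (Dx f) t x - (Dx f t x)^2 / 2)
          + ς2 * (a t x * Dx f t x - f t x * Dx a t x) - (f t x)^3
          + (f t x)^2 * Dx (Dx f) t x - (a t x)^2 * f t x - ς3 * (a t x)^2, ?_, ?_⟩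
      · intro x
        have H := (((((((hdf x).mul (hdfxt x)).add
            ((((hdf x).mul (hdfxx x)).sub (((hdfx x).pow 2).div_const 2)).const_mul ς1)).add
            ((((hda x).mul (hdfx x)).sub ((hdf x).mul (hdax x))).const_mul ς2)).sub
            ((hdf x).pow 3)).add
            (((hdf x).pow 2).mul (hdfxx x))).sub
            (((hda x).pow 2).mul (hdf x))).sub
            (((hda x).pow 2).const_mul ς3)
        refine H.congr_deriv (Eq.symm ?_)
        have e1 : Dt f t x - Dt (Dx (Dx f)) t x
            = ς1 * Dx (Dx (Dx f)) t x - ς2 * Dx (Dx a) t x - 3 * f t x * Dx f t x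
              + 2 * Dx f t x * Dx (Dx f) t x + f t x * Dx (Dx (Dx f)) t x
              - a t x * Dx a t x := heq1 t x
        have e2' : deriv (fun y => a t y * f t y) x = Dx a t x * f t x + a t x * Dx f t x :=
          ((hda x).mul (hdf x)).deriv
        have e2 : Dt a t x = ς2 * Dx (Dx f) t x - 2*ς3 * Dx a t x
            - (Dx a t x * f t x + a t x * Dx f t x) := by
          rw [← e2']; exact heq2 t x
        push_cast [Pi.pow_apply]
        linear_combination f t x * e1 + a t x * e2
      · have h0 : (L : ℝ) = 0 + L := (zero_add L).symm
        rw [h0]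
        simp only [hfp t 0, hap t 0, periodic_Dx hfp t 0, periodic_Dx hap t 0,
          periodic_Dx (fun s => periodic_Dx hfp s) t 0,
          periodic_Dt (fun s => periodic_Dx hfp s) t 0]
    have hcont : Continuous fun x =>
        f t x * Dt f t x + Dx f t x * Dt (Dx f) t x + a t x * Dt a t x := by
      have c1 : Continuous (f t) := cont_slice hf.continuous t
      have c2 : Continuous (Dt f t) := cont_slice (smooth_Dt hf).continuous t
      have c3 : Continuous (Dx f t) := cont_slice hfx.continuous t
      have c4 : Continuous (Dt (Dx f) t) := cont_slice (smooth_Dt hfx).continuous t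
      have c5 : Continuous (a t) := cont_slice ha.continuous t
      have c6 : Continuous (Dt a t) := cont_slice (smooth_Dt ha).continuous t
      exact ((c1.mul c2).add (c3.mul c4)).add (c5.mul c6)
    have hFTC := intervalIntegral.integral_eq_sub_of_hasDerivAt (f := g)
      (f' := fun x => f t x * Dt f t x + Dx f t x * Dt (Dx f) t x + a t x * Dt a t x)
      (fun x _ => hg x) (hcont.intervalIntegrable 0 L)
    rw [hFTC, hper, sub_self]
  -- smoothness of the energy density
  have hH : ContDiff ℝ (⊤ : ℕ∞) (uncurry (fun t x => (f t x)^2 + (Dx f t x)^2 + (a t x)^2)) := by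
    have h : (uncurry fun t x => (f t x)^2 + (Dx f t x)^2 + (a t x)^2)
        = fun p : ℝ × ℝ => (uncurry f p)^2 + (uncurry (Dx f) p)^2 + (uncurry a p)^2 := rfl
    rw [h]
    exact ((hf.pow 2).add (hfx.pow 2)).add (ha.pow 2)
  -- Step 1: the energy has zero time derivative
  have hE : ∀ t₀ : ℝ, HasDerivAt
      (fun t => ∫ x in (0:ℝ)..L, ((f t x)^2 + (Dx f t x)^2 + (a t x)^2)) 0 t₀ := by
    intro t₀
    have key := hasDerivAt_param_integral hH L t₀
    have hzero : (∫ x in (0:ℝ)..L,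
        Dt (fun t x => (f t x)^2 + (Dx f t x)^2 + (a t x)^2) t₀ x) = 0 := by
      have hpt : ∀ x, Dt (fun t x => (f t x)^2 + (Dx f t x)^2 + (a t x)^2) t₀ x
          = 2 * (f t₀ x * Dt f t₀ x + Dx f t₀ x * Dt (Dx f) t₀ x + a t₀ x * Dt a t₀ x) := by
        intro x
        have h2 : HasDerivAt (fun s => (f s x)^2 + (Dx f s x)^2 + (a s x)^2)
            (2 * (f t₀ x * Dt f t₀ x + Dx f t₀ x * Dt (Dx f) t₀ x + a t₀ x * Dt a t₀ x)) t₀ := by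
          have h := (((hasDerivAt_Dt hf t₀ x).pow 2).add
            ((hasDerivAt_Dt hfx t₀ x).pow 2)).add ((hasDerivAt_Dt ha t₀ x).pow 2)
          refine h.congr_deriv ?_
          push_cast; ring
        exact h2.deriv
      rw [intervalIntegral.integral_congr (g := fun x =>
        2 * (f t₀ x * Dt f t₀ x + Dx f t₀ x * Dt (Dx f) t₀ x + a t₀ x * Dt a t₀ x))
        (fun x _ => hpt x)]
      rw [intervalIntegral.integral_const_mul, step2 t₀, mul_zero]
    rwa [hzero] at key
  have hconst := is_const_of_deriv_eq_zero
    (f := fun t => ∫ x in (0:ℝ)..L, ((f t x)^2 + (Dx f t x)^2 + (a t x)^2))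
    (fun t => (hE t).differentiableAt) (fun t => (hE t).deriv) t₁ t₂
  exact congrArg (fun z => (1/2 : ℝ) * z) hconst
end

section
/- Let L > 0. Let f, a : ℝ × ℝ → ℝ be smooth functions of (t,x), L-periodic in x for every t, satisfying for all (t,x) the two-component Camassa–Holm equation: f_t − f_xxt = 2·f_x·f_xx + f·f_xxx − 3·f·f_x − a·a_x and a_t = −(a·f)_x. Then t ↦ ∫₀ᴸ [(1/2)·f(t,x)³ + (1/2)·f(t,x)·f_x(t,x)² + (1/2)·a(t,x)²·f(t,x)] dx is constant in t. (Conservation of the second Hamiltonian H2, coming from the bihamiltonian structure of Theorem 3.1 specialized to the metric M_{1,1,1/4,1,1,−1} with vanishing central charges.) -/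
open Function intervalIntegral
open scoped ContDiff

noncomputable section

lemma pd_t' (G : ℝ × ℝ → ℝ) (hG : Differentiable ℝ G) (t x : ℝ) :
    HasDerivAt (fun s => G (s, x)) (fderiv ℝ G (t, x) (1, 0)) t :=
  (hG (t, x)).hasFDerivAt.comp_hasDerivAt t ((hasDerivAt_id t).prodMk (hasDerivAt_const t x))

lemma pd_x' (G : ℝ × ℝ → ℝ) (hG : Differentiable ℝ G) (t x : ℝ) :
    HasDerivAt (fun y => G (t, y)) (fderiv ℝ G (t, x) (0, 1)) x :=
  (hG (t, x)).hasFDerivAt.comp_hasDerivAt x ((hasDerivAt_const x t).prodMk (hasDerivAt_id x))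

lemma fderiv_apply_contDiff (G : ℝ × ℝ → ℝ) (hG : ContDiff ℝ (⊤ : ℕ∞) G) (c : ℝ × ℝ) :
    ContDiff ℝ (⊤ : ℕ∞) (fun q => fderiv ℝ G q c) :=
  (hG.fderiv_right (by simp)).clm_apply contDiff_const

lemma clairaut' (G : ℝ × ℝ → ℝ) (hG : ContDiff ℝ (⊤ : ℕ∞) G) (t x : ℝ) :
    deriv (fun s => deriv (fun y => G (s, y)) x) t
      = deriv (fun y => deriv (fun s => G (s, y)) t) x := by
  have hGd : Differentiable ℝ G := hG.differentiable (by simp)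
  have hsym : IsSymmSndFDerivAt ℝ G (t, x) := hG.contDiffAt.isSymmSndFDerivAt (by simp; decide)
  have hd2 : DifferentiableAt ℝ (fderiv ℝ G) (t, x) :=
    ((hG.fderiv_right (m := (⊤ : ℕ∞)) (by simp)).differentiable (by simp)) (t, x)
  have l1 : (fun s => deriv (fun y => G (s, y)) x) = fun s => fderiv ℝ G (s, x) (0, 1) :=
    funext fun s => (pd_x' G hGd s x).deriv
  have l2 : HasDerivAt (fun s => fderiv ℝ G (s, x) (0, 1))
      (fderiv ℝ (fderiv ℝ G) (t, x) (1, 0) (0, 1)) t := by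
    have h := pd_t' (fun q => fderiv ℝ G q (0, 1))
      ((fderiv_apply_contDiff G hG (0, 1)).differentiable (by simp)) t x
    rw [fderiv_clm_apply hd2 (differentiableAt_const _)] at h
    simpa using h
  have r1 : (fun y => deriv (fun s => G (s, y)) t) = fun y => fderiv ℝ G (t, y) (1, 0) :=
    funext fun y => (pd_t' G hGd t y).deriv
  have r2 : HasDerivAt (fun y => fderiv ℝ G (t, y) (1, 0))
      (fderiv ℝ (fderiv ℝ G) (t, x) (0, 1) (1, 0)) x := by
    have h := pd_x' (fun q => fderiv ℝ G q (1, 0))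
      ((fderiv_apply_contDiff G hG (1, 0)).differentiable (by simp)) t x
    rw [fderiv_clm_apply hd2 (differentiableAt_const _)] at h
    simpa using h
  rw [l1, r1, l2.deriv, r2.deriv, hsym]

lemma clairaut3' (G : ℝ × ℝ → ℝ) (hG : ContDiff ℝ (⊤ : ℕ∞) G) (t x : ℝ) :
    deriv (fun s => deriv (deriv (fun y => G (s, y))) x) t
      = deriv (deriv (fun y => deriv (fun s => G (s, y)) t)) x := by
  set Gx : ℝ × ℝ → ℝ := fun q => fderiv ℝ G q (0, 1) with hGx_def
  have hGx : ContDiff ℝ (⊤ : ℕ∞) Gx := fderiv_apply_contDiff G hG (0, 1)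
  have hGd : Differentiable ℝ G := hG.differentiable (by simp)
  have step1 : ∀ s : ℝ, deriv (fun y => G (s, y)) = fun y => Gx (s, y) :=
    fun s => funext fun y => (pd_x' G hGd s y).deriv
  have lhs1 : (fun s => deriv (deriv (fun y => G (s, y))) x)
      = fun s => deriv (fun y => Gx (s, y)) x := by
    funext s; rw [step1 s]
  have mid := clairaut' Gx hGx t x
  have step2 : (fun y => deriv (fun s => Gx (s, y)) t)
      = deriv (fun y => deriv (fun s => G (s, y)) t) := by
    funext y
    have h1 : (fun s => Gx (s, y)) = fun s => deriv (fun y' => G (s, y')) y := by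
      funext s; rw [step1 s]
    rw [h1, clairaut' G hG t y]
  rw [lhs1, mid, step2]

lemma v_smooth' (G : ℝ × ℝ → ℝ) (hG : ContDiff ℝ (⊤ : ℕ∞) G) (t : ℝ) :
    ContDiff ℝ (⊤ : ℕ∞) (fun y => deriv (fun s => G (s, y)) t) := by
  have : (fun y => deriv (fun s => G (s, y)) t) = fun y => fderiv ℝ G (t, y) (1, 0) :=
    funext fun y => (pd_t' G (hG.differentiable (by simp)) t y).deriv
  rw [this]
  exact (fderiv_apply_contDiff G hG (1, 0)).comp (contDiff_const.prodMk contDiff_id)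

lemma slice_smooth' (G : ℝ × ℝ → ℝ) (hG : ContDiff ℝ (⊤ : ℕ∞) G) (t : ℝ) :
    ContDiff ℝ (⊤ : ℕ∞) (fun y => G (t, y)) :=
  hG.comp (contDiff_const.prodMk contDiff_id)

/-- the pointwise time-derivative of the H2 density -/
def Fp (f a : ℝ → ℝ → ℝ) (s x : ℝ) : ℝ :=
  3/2 * (f s x)^2 * fderiv ℝ (uncurry f) (s, x) (1, 0)
  + 1/2 * fderiv ℝ (uncurry f) (s, x) (1, 0) * (fderiv ℝ (uncurry f) (s, x) (0, 1))^2
  + f s x * fderiv ℝ (uncurry f) (s, x) (0, 1)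
      * fderiv ℝ (fun q : ℝ × ℝ => fderiv ℝ (uncurry f) q (0, 1)) (s, x) (1, 0)
  + a s x * fderiv ℝ (uncurry a) (s, x) (1, 0) * f s x
  + 1/2 * (a s x)^2 * fderiv ℝ (uncurry f) (s, x) (1, 0)

lemma hasDerivAt_H (L : ℝ) (hL : 0 < L) (f a : ℝ → ℝ → ℝ)
    (hf : ContDiff ℝ (⊤ : ℕ∞) (uncurry f)) (ha : ContDiff ℝ (⊤ : ℕ∞) (uncurry a)) (t : ℝ) :
    HasDerivAt (fun s => ∫ x in (0:ℝ)..L,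
        ((1/2) * (f s x)^3 + (1/2) * f s x * (deriv (f s) x)^2
          + (1/2) * (a s x)^2 * f s x))
      (∫ x in (0:ℝ)..L, Fp f a t x) t := by
  have hfd : Differentiable ℝ (uncurry f) := hf.differentiable (by simp)
  have had : Differentiable ℝ (uncurry a) := ha.differentiable (by simp)
  -- continuity of Fp
  have hFpc : Continuous (fun q : ℝ × ℝ => Fp f a q.1 q.2) := by
    have c0 : Continuous (fun q : ℝ × ℝ => f q.1 q.2) := hf.continuous
    have c0a : Continuous (fun q : ℝ × ℝ => a q.1 q.2) := ha.continuous
    have c1 : Continuous (fun q : ℝ × ℝ => fderiv ℝ (uncurry f) q (1, 0)) :=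
      (fderiv_apply_contDiff _ hf _).continuous
    have c2 : Continuous (fun q : ℝ × ℝ => fderiv ℝ (uncurry f) q (0, 1)) :=
      (fderiv_apply_contDiff _ hf _).continuous
    have c3 : Continuous
        (fun q : ℝ × ℝ => fderiv ℝ (fun r : ℝ × ℝ => fderiv ℝ (uncurry f) r (0, 1)) q (1, 0)) :=
      (fderiv_apply_contDiff _ (fderiv_apply_contDiff _ hf _) _).continuous
    have c4 : Continuous (fun q : ℝ × ℝ => fderiv ℝ (uncurry a) q (1, 0)) :=
      (fderiv_apply_contDiff _ ha _).continuous
    unfold Fp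
    fun_prop
  -- compact bound
  obtain ⟨C, hC⟩ := (isCompact_Icc.prod isCompact_uIcc :
      IsCompact (Set.Icc (t-1) (t+1) ×ˢ Set.uIcc (0:ℝ) L)).exists_bound_of_continuousOn
    hFpc.continuousOn
  -- slice continuity
  have hslice : ∀ s : ℝ, Continuous (fun x =>
      (1/2) * (f s x)^3 + (1/2) * f s x * (deriv (f s) x)^2 + (1/2) * (a s x)^2 * f s x) := by
    intro s
    have hc1 : Continuous (f s) := (slice_smooth' (uncurry f) hf s).continuous
    have hc2 : Continuous (deriv (f s)) :=
      (contDiff_infty_iff_deriv.mp ((slice_smooth' (uncurry f) hf s).of_le (by simp))).2.continuous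
    have hc3 : Continuous (a s) := (slice_smooth' (uncurry a) ha s).continuous
    fun_prop
  refine (intervalIntegral.hasDerivAt_integral_of_dominated_loc_of_deriv_le
    (F' := fun s x => Fp f a s x) (bound := fun _ => C) (Metric.ball_mem_nhds t one_pos)
    (Filter.Eventually.of_forall fun s => (hslice s).aestronglyMeasurable)
    ((hslice t).intervalIntegrable 0 L)
    ((hFpc.comp (Continuous.prodMk_right t)).aestronglyMeasurable)
    (MeasureTheory.ae_of_all _ ?_) (intervalIntegrable_const)
    (MeasureTheory.ae_of_all _ ?_)).2
  · -- bound
    intro x hx s hs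
    have hxI : x ∈ Set.uIcc (0:ℝ) L := Set.uIoc_subset_uIcc hx
    have hsI : s ∈ Set.Icc (t-1) (t+1) := by
      rw [Real.ball_eq_Ioo] at hs
      exact Set.Ioo_subset_Icc_self hs
    exact hC (s, x) (Set.mk_mem_prod hsI hxI)
  · -- differentiability in s
    intro x hx s hs
    have Hf : HasDerivAt (fun σ => f σ x) (fderiv ℝ (uncurry f) (s, x) (1, 0)) s :=
      pd_t' (uncurry f) hfd s x
    have Ha : HasDerivAt (fun σ => a σ x) (fderiv ℝ (uncurry a) (s, x) (1, 0)) s :=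
      pd_t' (uncurry a) had s x
    have Hfx : HasDerivAt (fun σ => deriv (f σ) x)
        (fderiv ℝ (fun q : ℝ × ℝ => fderiv ℝ (uncurry f) q (0, 1)) (s, x) (1, 0)) s := by
      have h0 : (fun σ => deriv (f σ) x)
          = fun σ => (fun q : ℝ × ℝ => fderiv ℝ (uncurry f) q (0, 1)) (σ, x) :=
        funext fun σ => (pd_x' (uncurry f) hfd σ x).deriv
      rw [h0]
      exact pd_t' _ ((fderiv_apply_contDiff _ hf _).differentiable (by simp)) s x
    have hXeq : fderiv ℝ (uncurry f) (s, x) (0, 1) = deriv (f s) x :=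
      ((pd_x' (uncurry f) hfd s x).deriv).symm
    have HF := (((Hf.pow 3).const_mul (1/2 : ℝ)).add
        ((Hf.const_mul (1/2 : ℝ)).mul (Hfx.pow 2))).add
        (((Ha.pow 2).const_mul (1/2 : ℝ)).mul Hf)
    refine HF.congr_deriv ?_
    unfold Fp
    beta_reduce
    rw [hXeq]
    push_cast
    simp only [Pi.pow_apply]
    ring


lemma periodic_deriv' {F : ℝ → ℝ} {L : ℝ} (h : Function.Periodic F L) :
    Function.Periodic (deriv F) L := by
  intro x
  have : (fun y => F (y + L)) = F := funext fun y => h y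
  calc deriv F (x + L) = deriv (fun y => F (y + L)) x := (deriv_comp_add_const F L x).symm
    _ = deriv F x := by rw [this]

lemma sd' {F : ℝ → ℝ} (h : ContDiff ℝ ∞ F) :
    Differentiable ℝ F ∧ ContDiff ℝ ∞ (deriv F) := contDiff_infty_iff_deriv.mp h

lemma integral_E_zero (L : ℝ) (hL : 0 < L) (u p v : ℝ → ℝ)
    (hu : ContDiff ℝ ∞ u) (hp : ContDiff ℝ ∞ p) (hv : ContDiff ℝ ∞ v)
    (hup : Function.Periodic u L) (hpp : Function.Periodic p L)
    (hvp : Function.Periodic v L)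
    (hR : ∀ x, v x - deriv (deriv v) x
      = 2 * deriv u x * deriv (deriv u) x + u x * deriv (deriv (deriv u)) x
        - 3 * u x * deriv u x - p x * deriv p x) :
    (∫ x in (0:ℝ)..L,
      (3/2 * (u x)^2 * v x + 1/2 * v x * (deriv u x)^2 + u x * deriv u x * deriv v x
        + p x * (-(deriv p x * u x + p x * deriv u x)) * u x + 1/2 * (p x)^2 * v x)) = 0 := by
  -- derivative functions
  obtain ⟨hud, hu1⟩ := sd' hu
  obtain ⟨hu1d, hu2⟩ := sd' hu1
  obtain ⟨hu2d, hu3⟩ := sd' hu2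
  obtain ⟨hpd, hp1⟩ := sd' hp
  obtain ⟨hvd, hv1⟩ := sd' hv
  obtain ⟨hv1d, hv2⟩ := sd' hv1
  set u1 := deriv u with hu1_def
  set u2 := deriv u1 with hu2_def
  set u3 := deriv u2 with hu3_def
  set p1 := deriv p with hp1_def
  set v1 := deriv v with hv1_def'
  -- g
  set g : ℝ → ℝ := fun x => 3/2 * (u x)^2 - 1/2 * (u1 x)^2 - u x * u2 x + 1/2 * (p x)^2
    with hg_def
  have hgc : Continuous g := by
    apply Continuous.add
    apply Continuous.sub
    apply Continuous.sub
    · exact (continuous_const.mul ((hu.continuous).pow 2))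
    · exact (continuous_const.mul ((hu1.continuous).pow 2))
    · exact (hu.continuous).mul hu2.continuous
    · exact continuous_const.mul ((hp.continuous).pow 2)
  have hgd : ∀ x, HasDerivAt g
      (3 * u x * u1 x - u1 x * u2 x - (u1 x * u2 x + u x * u3 x) + p x * p1 x) x := by
    intro x
    have h1 : HasDerivAt (fun y => 3/2 * (u y)^2)
        (3 * u x * u1 x) x := by
      have := ((hud x).hasDerivAt.pow 2).const_mul (3/2 : ℝ)
      refine this.congr_deriv ?_
      push_cast; ring
    have h2 : HasDerivAt (fun y => 1/2 * (u1 y)^2) (u1 x * u2 x) x := by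
      have := ((hu1d x).hasDerivAt.pow 2).const_mul (1/2 : ℝ)
      refine this.congr_deriv ?_
      push_cast; ring
    have h3 : HasDerivAt (fun y => u y * u2 y) (u1 x * u2 x + u x * u3 x) x :=
      (hud x).hasDerivAt.mul (hu2d x).hasDerivAt
    have h4 : HasDerivAt (fun y => 1/2 * (p y)^2) (p x * p1 x) x := by
      have := ((hpd x).hasDerivAt.pow 2).const_mul (1/2 : ℝ)
      refine this.congr_deriv ?_
      push_cast; ring
    exact ((h1.sub h2).sub h3).add h4
  -- periodicity of derivatives and g
  have hu1p : Function.Periodic u1 L := periodic_deriv' hup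
  have hu2p : Function.Periodic u2 L := periodic_deriv' hu1p
  have hpp1 : Function.Periodic p1 L := periodic_deriv' hpp
  have hv1p : Function.Periodic v1 L := periodic_deriv' hvp
  have hgp : Function.Periodic g L := by
    intro x; simp only [hg_def, hup x, hu1p x, hu2p x, hpp x]
  -- the auxiliary integrals
  set Cg : ℝ → ℝ := fun x => ∫ s in (0:ℝ)..x, Real.cosh s * g s with hCg_def
  set Sg : ℝ → ℝ := fun x => ∫ s in (0:ℝ)..x, Real.sinh s * g s with hSg_def
  have hCgc : Continuous (fun s => Real.cosh s * g s) := Real.continuous_cosh.mul hgc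
  have hSgc : Continuous (fun s => Real.sinh s * g s) := Real.continuous_sinh.mul hgc
  have hCgd : ∀ x, HasDerivAt Cg (Real.cosh x * g x) x := fun x =>
    intervalIntegral.integral_hasDerivAt_right (hCgc.intervalIntegrable 0 x)
      hCgc.aestronglyMeasurable.stronglyMeasurableAtFilter hCgc.continuousAt
  have hSgd : ∀ x, HasDerivAt Sg (Real.sinh x * g x) x := fun x =>
    intervalIntegral.integral_hasDerivAt_right (hSgc.intervalIntegrable 0 x)
      hSgc.aestronglyMeasurable.stronglyMeasurableAtFilter hSgc.continuousAt
  -- constants A, B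
  set WpL : ℝ := -(Real.sinh L * Cg L) + Real.cosh L * Sg L with hWpL_def
  set DpL : ℝ := -(Real.cosh L * Cg L) + Real.sinh L * Sg L with hDpL_def
  have heL : Real.exp L - 1 ≠ 0 := by
    have := Real.add_one_le_exp L
    linarith
  have heL' : Real.exp (-L) - 1 ≠ 0 := by
    have : Real.exp (-L) < 1 := by
      rw [Real.exp_lt_one_iff]; linarith
    linarith
  set A : ℝ := -((WpL + DpL) / (2 * (Real.exp L - 1))) with hA_def
  set B : ℝ := (DpL - WpL) / (2 * (Real.exp (-L) - 1)) with hB_def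
  -- W and W1
  set W : ℝ → ℝ := fun x => -(Real.sinh x * Cg x) + Real.cosh x * Sg x
      + A * Real.exp x + B * Real.exp (-x) with hW_def
  set W1 : ℝ → ℝ := fun x => -(Real.cosh x * Cg x) + Real.sinh x * Sg x
      + A * Real.exp x - B * Real.exp (-x) with hW1_def
  have hexp : ∀ x : ℝ, HasDerivAt (fun y : ℝ => Real.exp (-y)) (-Real.exp (-x)) x := by
    intro x
    have := (Real.hasDerivAt_exp (-x)).comp x (hasDerivAt_neg x)
    simpa [Function.comp_def] using this
  have hWd : ∀ x, HasDerivAt W (W1 x) x := by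
    intro x
    have h := ((((Real.hasDerivAt_sinh x).mul (hCgd x)).neg.add
        ((Real.hasDerivAt_cosh x).mul (hSgd x))).add
        ((Real.hasDerivAt_exp x).const_mul A)).add ((hexp x).const_mul B)
    refine h.congr_deriv ?_
    simp only [hW1_def]; ring
  have hW1d : ∀ x, HasDerivAt W1 (W x - g x) x := by
    intro x
    have h := ((((Real.hasDerivAt_cosh x).mul (hCgd x)).neg.add
        ((Real.hasDerivAt_sinh x).mul (hSgd x))).add
        ((Real.hasDerivAt_exp x).const_mul A)).sub ((hexp x).const_mul B)
    refine h.congr_deriv ?_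
    have hcs := Real.cosh_sq_sub_sinh_sq x
    simp only [hW_def]
    symm
    linear_combination (g x) * hcs
  -- endpoint values
  have hCg0 : Cg 0 = 0 := intervalIntegral.integral_same
  have hSg0 : Sg 0 = 0 := intervalIntegral.integral_same
  have hW0 : W 0 = A + B := by
    simp [hW_def, hCg0, hSg0, Real.sinh_zero, Real.cosh_zero]
  have hW10 : W1 0 = A - B := by
    simp [hW1_def, hCg0, hSg0, Real.sinh_zero, Real.cosh_zero]
  have hWL : W L = A + B := by
    have : W L = WpL + A * Real.exp L + B * Real.exp (-L) := by
      simp only [hW_def, hWpL_def]; try ring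
    rw [this, hA_def, hB_def]
    field_simp
    try ring
  have hW1L : W1 L = A - B := by
    have : W1 L = DpL + A * Real.exp L - B * Real.exp (-L) := by
      simp only [hW1_def, hDpL_def]; try ring
    rw [this, hA_def, hB_def]
    field_simp
    try ring
  -- derivative of v1 with substituted value
  have hv1dAt : ∀ x, HasDerivAt v1
      (v x - (2 * u1 x * u2 x + u x * u3 x - 3 * u x * u1 x - p x * p1 x)) x := by
    intro x
    have h0 : HasDerivAt v1 (deriv v1 x) x := (hv1d x).hasDerivAt
    have hr := hR x
    have : deriv v1 x = v x - (2 * u1 x * u2 x + u x * u3 x - 3 * u x * u1 x - p x * p1 x) := by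
      linarith
    rwa [this] at h0
  -- the flux function
  set F : ℝ → ℝ := fun x => u x * u1 x * v x - 1/2 * (p x * u x)^2 + v1 x * W x
      - v x * W1 x - g x * W x + 1/2 * (W x)^2 - 1/2 * (W1 x)^2 with hF_def
  have hFd : ∀ x, HasDerivAt F
      (3/2 * (u x)^2 * v x + 1/2 * v x * (u1 x)^2 + u x * u1 x * v1 x
        + p x * (-(p1 x * u x + p x * u1 x)) * u x + 1/2 * (p x)^2 * v x) x := by
    intro x
    have h1 := ((hud x).hasDerivAt.mul (hu1d x).hasDerivAt).mul (hvd x).hasDerivAt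
    have h2 := ((((hpd x).hasDerivAt.mul (hud x).hasDerivAt).pow 2).const_mul (1/2 : ℝ))
    have h3 := (hv1dAt x).mul (hWd x)
    have h4 := (hvd x).hasDerivAt.mul (hW1d x)
    have h5 := (hgd x).mul (hWd x)
    have h6 := ((hWd x).pow 2).const_mul (1/2 : ℝ)
    have h7 := ((hW1d x).pow 2).const_mul (1/2 : ℝ)
    have HF := ((((((h1.sub h2).add h3).sub h4).sub h5).add h6).sub h7)
    refine HF.congr_deriv ?_
    push_cast
    simp only [Pi.mul_apply, hu1_def, hv1_def', hg_def]
    ring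
  -- continuity of the integrand
  have hEc : Continuous (fun x => 3/2 * (u x)^2 * v x + 1/2 * v x * (u1 x)^2
      + u x * u1 x * v1 x + p x * (-(p1 x * u x + p x * u1 x)) * u x
      + 1/2 * (p x)^2 * v x) := by
    have c1 := hu.continuous
    have c2 := hu1.continuous
    have c3 := hv.continuous
    have c4 := hv1.continuous
    have c5 := hp.continuous
    have c6 := hp1.continuous
    fun_prop
  have key := intervalIntegral.integral_eq_sub_of_hasDerivAt
    (f := F) (a := (0:ℝ)) (b := L) (fun x _ => hFd x) (hEc.intervalIntegrable 0 L)
  rw [key]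
  -- endpoint equalities
  have eu : u L = u 0 := by simpa using hup 0
  have eu1 : u1 L = u1 0 := by simpa using hu1p 0
  have ev : v L = v 0 := by simpa using hvp 0
  have ev1 : v1 L = v1 0 := by simpa using hv1p 0
  have ep : p L = p 0 := by simpa using hpp 0
  have eg : g L = g 0 := by simpa using hgp 0
  have eW : W L = W 0 := by rw [hWL, hW0]
  have eW1 : W1 L = W1 0 := by rw [hW1L, hW10]
  have : F L = F 0 := by
    simp only [hF_def]
    rw [eu, eu1, ev, ev1, ep, eg, eW, eW1]
  rw [this, sub_self]

/-- Conservation of the second Hamiltonian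
`H2 = ∫ ((1/2) f³ + (1/2) f f_x² + (1/2) a² f) dx` along the two-component
Camassa–Holm flow (Theorem 3.1 specialized to `M_{1,1,1/4,1,1,−1}` with
vanishing central charges). -/
theorem statement_13 (L : ℝ) (hL : 0 < L)
    (f a : ℝ → ℝ → ℝ)
    (hf : ContDiff ℝ (⊤ : ℕ∞) (Function.uncurry f)) (ha : ContDiff ℝ (⊤ : ℕ∞) (Function.uncurry a))
    (hfp : ∀ t, Function.Periodic (f t) L) (hap : ∀ t, Function.Periodic (a t) L)
    (heq1 : ∀ t x, deriv (fun s => f s x) t - deriv (fun s => deriv (deriv (f s)) x) t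
      = 2 * deriv (f t) x * deriv (deriv (f t)) x
        + f t x * deriv (deriv (deriv (f t))) x
        - 3 * f t x * deriv (f t) x
        - a t x * deriv (a t) x)
    (heq2 : ∀ t x, deriv (fun s => a s x) t = -deriv (fun y => a t y * f t y) x) :
    ∀ t₁ t₂ : ℝ,
      (∫ x in (0:ℝ)..L,
        ((1/2) * (f t₁ x)^3 + (1/2) * f t₁ x * (deriv (f t₁) x)^2
          + (1/2) * (a t₁ x)^2 * f t₁ x))
      = (∫ x in (0:ℝ)..L,
        ((1/2) * (f t₂ x)^3 + (1/2) * f t₂ x * (deriv (f t₂) x)^2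
          + (1/2) * (a t₂ x)^2 * f t₂ x)) := by
  intro t₁ t₂
  have hfd : Differentiable ℝ (uncurry f) := hf.differentiable (by simp)
  have had : Differentiable ℝ (uncurry a) := ha.differentiable (by simp)
  have key : ∀ t : ℝ, HasDerivAt (fun s => ∫ x in (0:ℝ)..L,
      ((1/2) * (f s x)^3 + (1/2) * f s x * (deriv (f s) x)^2
        + (1/2) * (a s x)^2 * f s x)) 0 t := by
    intro t
    have h1 := hasDerivAt_H L hL f a hf ha t
    have hu : ContDiff ℝ ∞ (f t) := (slice_smooth' (uncurry f) hf t).of_le (by simp)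
    have hp : ContDiff ℝ ∞ (a t) := (slice_smooth' (uncurry a) ha t).of_le (by simp)
    have hv : ContDiff ℝ ∞ (fun y => deriv (fun s => f s y) t) :=
      (v_smooth' (uncurry f) hf t).of_le (by simp)
    have hvp : Function.Periodic (fun y => deriv (fun s => f s y) t) L := by
      intro y
      have h : (fun s => f s (y + L)) = fun s => f s y := funext fun s => hfp s y
      simp only [h]
    have hR : ∀ x, (fun y => deriv (fun s => f s y) t) x
          - deriv (deriv (fun y => deriv (fun s => f s y) t)) x
        = 2 * deriv (f t) x * deriv (deriv (f t)) x
          + f t x * deriv (deriv (deriv (f t))) x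
          - 3 * f t x * deriv (f t) x - a t x * deriv (a t) x := by
      intro x
      have h3 : deriv (fun s => deriv (deriv (f s)) x) t
          = deriv (deriv (fun y => deriv (fun s => f s y) t)) x :=
        clairaut3' (uncurry f) hf t x
      have h1' := heq1 t x
      rw [h3] at h1'
      exact h1'
    have hE := integral_E_zero L hL (f t) (a t) (fun y => deriv (fun s => f s y) t)
      hu hp hv (hfp t) (hap t) hvp hR
    have heqp : ∀ x : ℝ, Fp f a t x
        = 3/2 * (f t x)^2 * (fun y => deriv (fun s => f s y) t) x
          + 1/2 * (fun y => deriv (fun s => f s y) t) x * (deriv (f t) x)^2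
          + f t x * deriv (f t) x * deriv (fun y => deriv (fun s => f s y) t) x
          + a t x * (-(deriv (a t) x * f t x + a t x * deriv (f t) x)) * f t x
          + 1/2 * (a t x)^2 * (fun y => deriv (fun s => f s y) t) x := by
      intro x
      have e1 : fderiv ℝ (uncurry f) (t, x) (1, 0) = deriv (fun s => f s x) t :=
        ((pd_t' (uncurry f) hfd t x).deriv).symm
      have e2 : fderiv ℝ (uncurry f) (t, x) (0, 1) = deriv (f t) x :=
        ((pd_x' (uncurry f) hfd t x).deriv).symm
      have e3 : fderiv ℝ (fun q : ℝ × ℝ => fderiv ℝ (uncurry f) q (0, 1)) (t, x) (1, 0)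
          = deriv (fun y => deriv (fun s => f s y) t) x := by
        have hA : deriv (fun s => deriv (f s) x) t
            = deriv (fun y => deriv (fun s => f s y) t) x := clairaut' (uncurry f) hf t x
        have hB : (fun s => deriv (f s) x)
            = fun s => (fun q : ℝ × ℝ => fderiv ℝ (uncurry f) q (0, 1)) (s, x) :=
          funext fun s => (pd_x' (uncurry f) hfd s x).deriv
        have hC2 := (pd_t' (fun q : ℝ × ℝ => fderiv ℝ (uncurry f) q (0, 1))
          ((fderiv_apply_contDiff _ hf _).differentiable (by simp)) t x).deriv
        calc fderiv ℝ (fun q : ℝ × ℝ => fderiv ℝ (uncurry f) q (0, 1)) (t, x) (1, 0)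
            = deriv (fun s => (fun q : ℝ × ℝ => fderiv ℝ (uncurry f) q (0, 1)) (s, x)) t :=
              hC2.symm
          _ = deriv (fun s => deriv (f s) x) t := by rw [← hB]
          _ = deriv (fun y => deriv (fun s => f s y) t) x := hA
      have e4 : fderiv ℝ (uncurry a) (t, x) (1, 0)
          = -(deriv (a t) x * f t x + a t x * deriv (f t) x) := by
        have h0 : fderiv ℝ (uncurry a) (t, x) (1, 0) = deriv (fun s => a s x) t :=
          ((pd_t' (uncurry a) had t x).deriv).symm
        have hmul : deriv (fun y => a t y * f t y) x
            = deriv (a t) x * f t x + a t x * deriv (f t) x :=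
          deriv_mul ((slice_smooth' (uncurry a) ha t).differentiable (by simp) x)
            ((slice_smooth' (uncurry f) hf t).differentiable (by simp) x)
        rw [h0, heq2 t x, hmul]
      unfold Fp
      rw [e1, e2, e3, e4]
      try beta_reduce
      try ring
    have hzero : (∫ x in (0:ℝ)..L, Fp f a t x) = 0 := by
      have hcongr : (∫ x in (0:ℝ)..L, Fp f a t x)
          = ∫ x in (0:ℝ)..L,
            (3/2 * (f t x)^2 * (fun y => deriv (fun s => f s y) t) x
              + 1/2 * (fun y => deriv (fun s => f s y) t) x * (deriv (f t) x)^2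
              + f t x * deriv (f t) x * deriv (fun y => deriv (fun s => f s y) t) x
              + a t x * (-(deriv (a t) x * f t x + a t x * deriv (f t) x)) * f t x
              + 1/2 * (a t x)^2 * (fun y => deriv (fun s => f s y) t) x) :=
        intervalIntegral.integral_congr fun x _ => heqp x
      rw [hcongr]
      exact hE
    rw [hzero] at h1
    exact h1
  exact is_const_of_deriv_eq_zero (fun s => (key s).differentiableAt)
    (fun s => (key s).deriv) t₁ t₂

end
end

section
/- Let L > 0 and let ς1, ς2, ς3 be real constants. Let f, a : ℝ × ℝ → ℝ be smooth functions of (t,x), L-periodic in x for every t, satisfying for all (t,x): −f_xxt = ς1·f_xxx − ς2·a_xx + 2·f_x·f_xx + f·f_xxx − a·a_x and a_t = ς2·f_xx − 2ς3·a_x − (a·f)_x. Then t ↦ (1/2)∫₀ᴸ [f_x(t,x)² + a(t,x)²] dx is constant in t. (For ς1 = ς2 = ς3 = 0 this system is the two-component Hunter–Saxton equation; the conserved quantity is the homogeneous Ḣ¹-type energy Hamiltonian H1.) -/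
open Function MeasureTheory

noncomputable def pd (v : ℝ × ℝ) (g : ℝ × ℝ → ℝ) : ℝ × ℝ → ℝ := fun p => fderiv ℝ g p v

lemma pd_smooth (v : ℝ × ℝ) {g : ℝ × ℝ → ℝ} (hg : ContDiff ℝ (⊤ : ℕ∞) g) : ContDiff ℝ (⊤ : ℕ∞) (pd v g) :=
  (hg.fderiv_right (by simp)).clm_apply contDiff_const

lemma hasDerivAt_slice_x {g : ℝ × ℝ → ℝ} (hg : ContDiff ℝ (⊤ : ℕ∞) g) (t x : ℝ) :
    HasDerivAt (fun y => g (t, y)) (pd (0,1) g (t,x)) x :=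
  ((hg.differentiable (by simp) (t,x)).hasFDerivAt.comp_hasDerivAt x
    ((hasDerivAt_const x t).prodMk (hasDerivAt_id x)))

lemma hasDerivAt_slice_t {g : ℝ × ℝ → ℝ} (hg : ContDiff ℝ (⊤ : ℕ∞) g) (t x : ℝ) :
    HasDerivAt (fun s => g (s, x)) (pd (1,0) g (t,x)) t :=
  ((hg.differentiable (by simp) (t,x)).hasFDerivAt.comp_hasDerivAt t
    ((hasDerivAt_id t).prodMk (hasDerivAt_const t x)))

lemma pd_comm {g : ℝ × ℝ → ℝ} (hg : ContDiff ℝ (⊤ : ℕ∞) g) (v w : ℝ × ℝ) (p : ℝ × ℝ) :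
    pd v (pd w g) p = pd w (pd v g) p := by
  have hdd : DifferentiableAt ℝ (fderiv ℝ g) p :=
    ((hg.fderiv_right (m := (⊤ : ℕ∞)) (by simp)).differentiable (by simp)) p
  have h1 : ∀ u : ℝ × ℝ, HasFDerivAt (pd u g)
      ((ContinuousLinearMap.apply ℝ ℝ u).comp (fderiv ℝ (fderiv ℝ g) p)) p := fun u =>
    (ContinuousLinearMap.apply ℝ ℝ u).hasFDerivAt.comp p hdd.hasFDerivAt
  have hsymm := second_derivative_symmetric (f' := fderiv ℝ g)
    (fun y => (hg.differentiable (by simp) y).hasFDerivAt) hdd.hasFDerivAt v w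
  calc pd v (pd w g) p = fderiv ℝ (fderiv ℝ g) p v w := by
        rw [pd, (h1 w).fderiv]; rfl
    _ = fderiv ℝ (fderiv ℝ g) p w v := hsymm
    _ = pd w (pd v g) p := by rw [pd, (h1 v).fderiv]; rfl

lemma periodic_pd01 {L : ℝ} {g : ℝ × ℝ → ℝ} (hg : ContDiff ℝ (⊤ : ℕ∞) g)
    (hp : ∀ t x, g (t, x + L) = g (t, x)) : ∀ t x, pd (0,1) g (t, x + L) = pd (0,1) g (t, x) := by
  intro t x
  rw [← (hasDerivAt_slice_x hg t (x + L)).deriv, ← (hasDerivAt_slice_x hg t x).deriv,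
    ← deriv_comp_add_const]
  congr 1
  funext y
  exact hp t y

lemma periodic_pd10 {L : ℝ} {g : ℝ × ℝ → ℝ} (hg : ContDiff ℝ (⊤ : ℕ∞) g)
    (hp : ∀ t x, g (t, x + L) = g (t, x)) : ∀ t x, pd (1,0) g (t, x + L) = pd (1,0) g (t, x) := by
  intro t x
  rw [← (hasDerivAt_slice_t hg t (x + L)).deriv, ← (hasDerivAt_slice_t hg t x).deriv]
  congr 1
  funext s
  exact hp s x

noncomputable def Hfun (ς1 ς2 ς3 : ℝ) (F A : ℝ × ℝ → ℝ) : ℝ × ℝ → ℝ := fun p =>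
  F p * pd (1,0) (pd (0,1) F) p
  + ς1 * (F p * pd (0,1) (pd (0,1) F) p - (pd (0,1) F p)^2/2)
  + ς2 * (A p * pd (0,1) F p - F p * pd (0,1) A p)
  + (F p)^2 * pd (0,1) (pd (0,1) F) p
  - ς3 * (A p)^2 - (A p)^2 * F p

lemma hasDerivAt_H_s14 (ς1 ς2 ς3 : ℝ) {F A : ℝ × ℝ → ℝ}
    (hF : ContDiff ℝ (⊤ : ℕ∞) F) (hA : ContDiff ℝ (⊤ : ℕ∞) A)
    (E1 : ∀ t x, -(pd (1,0) (pd (0,1) (pd (0,1) F)) (t,x))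
      = ς1 * pd (0,1) (pd (0,1) (pd (0,1) F)) (t,x) - ς2 * pd (0,1) (pd (0,1) A) (t,x)
        + 2 * pd (0,1) F (t,x) * pd (0,1) (pd (0,1) F) (t,x)
        + F (t,x) * pd (0,1) (pd (0,1) (pd (0,1) F)) (t,x)
        - A (t,x) * pd (0,1) A (t,x))
    (E2 : ∀ t x, pd (1,0) A (t,x)
      = ς2 * pd (0,1) (pd (0,1) F) (t,x) - 2*ς3 * pd (0,1) A (t,x)
        - (pd (0,1) A (t,x) * F (t,x) + A (t,x) * pd (0,1) F (t,x)))
    (t x : ℝ) :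
    HasDerivAt (fun y => Hfun ς1 ς2 ς3 F A (t, y))
      (pd (0,1) F (t,x) * pd (1,0) (pd (0,1) F) (t,x) + A (t,x) * pd (1,0) A (t,x)) x := by
  have hF1 : ContDiff ℝ (⊤ : ℕ∞) (pd (0,1) F) := pd_smooth _ hF
  have hF2 : ContDiff ℝ (⊤ : ℕ∞) (pd (0,1) (pd (0,1) F)) := pd_smooth _ hF1
  have hA1 : ContDiff ℝ (⊤ : ℕ∞) (pd (0,1) A) := pd_smooth _ hA
  have hF1t : ContDiff ℝ (⊤ : ℕ∞) (pd (1,0) (pd (0,1) F)) := pd_smooth _ hF1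
  have d0 := hasDerivAt_slice_x hF t x
  have d1 := hasDerivAt_slice_x hF1 t x
  have d2 := hasDerivAt_slice_x hF2 t x
  have dA := hasDerivAt_slice_x hA t x
  have dA1 := hasDerivAt_slice_x hA1 t x
  have dF1t := hasDerivAt_slice_x hF1t t x
  have big := ((((d0.mul dF1t).add ((((d0.mul d2)).sub ((d1.pow 2).div_const 2)).const_mul ς1)).add
      ((((dA.mul d1)).sub (d0.mul dA1)).const_mul ς2)).add ((d0.pow 2).mul d2)).sub
      ((dA.pow 2).const_mul ς3) |>.sub ((dA.pow 2).mul d0)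
  refine big.congr_deriv ?_
  have hc : pd (0,1) (pd (1,0) (pd (0,1) F)) (t,x) = pd (1,0) (pd (0,1) (pd (0,1) F)) (t,x) :=
    pd_comm hF1 (0,1) (1,0) (t,x)
  have e1 := E1 t x
  have e2 := E2 t x
  rw [hc]
  push_cast
  simp only [Pi.pow_apply]
  linear_combination (-(F (t,x))) * e1 - (A (t,x)) * e2

lemma Hfun_periodic {L : ℝ} (ς1 ς2 ς3 : ℝ) {F A : ℝ × ℝ → ℝ}
    (hF : ContDiff ℝ (⊤ : ℕ∞) F) (hA : ContDiff ℝ (⊤ : ℕ∞) A)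
    (hFp : ∀ t x, F (t, x + L) = F (t, x)) (hAp : ∀ t x, A (t, x + L) = A (t, x)) :
    ∀ t x, Hfun ς1 ς2 ς3 F A (t, x + L) = Hfun ς1 ς2 ς3 F A (t, x) := by
  intro t x
  have p1 := periodic_pd01 hF hFp
  have p2 := periodic_pd01 (pd_smooth (0,1) hF) p1
  have pA1 := periodic_pd01 hA hAp
  have p1t := periodic_pd10 (pd_smooth (0,1) hF) p1
  unfold Hfun
  rw [hFp, hAp, p1, p2, pA1, p1t]

theorem aux_conserved (L : ℝ) (hL : 0 < L) (ς1 ς2 ς3 : ℝ) {F A : ℝ × ℝ → ℝ}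
    (hF : ContDiff ℝ (⊤ : ℕ∞) F) (hA : ContDiff ℝ (⊤ : ℕ∞) A)
    (hFp : ∀ t x, F (t, x + L) = F (t, x)) (hAp : ∀ t x, A (t, x + L) = A (t, x))
    (E1 : ∀ t x, -(pd (1,0) (pd (0,1) (pd (0,1) F)) (t,x))
      = ς1 * pd (0,1) (pd (0,1) (pd (0,1) F)) (t,x) - ς2 * pd (0,1) (pd (0,1) A) (t,x)
        + 2 * pd (0,1) F (t,x) * pd (0,1) (pd (0,1) F) (t,x)
        + F (t,x) * pd (0,1) (pd (0,1) (pd (0,1) F)) (t,x)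
        - A (t,x) * pd (0,1) A (t,x))
    (E2 : ∀ t x, pd (1,0) A (t,x)
      = ς2 * pd (0,1) (pd (0,1) F) (t,x) - 2*ς3 * pd (0,1) A (t,x)
        - (pd (0,1) A (t,x) * F (t,x) + A (t,x) * pd (0,1) F (t,x)))
    (t₁ t₂ : ℝ) (h12 : t₁ ≤ t₂) :
    ∫ x in (0:ℝ)..L, ((pd (0,1) F (t₁,x))^2 + (A (t₁,x))^2)
      = ∫ x in (0:ℝ)..L, ((pd (0,1) F (t₂,x))^2 + (A (t₂,x))^2) := by
  have hF1 : ContDiff ℝ (⊤ : ℕ∞) (pd (0,1) F) := pd_smooth _ hF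
  have hF1t : ContDiff ℝ (⊤ : ℕ∞) (pd (1,0) (pd (0,1) F)) := pd_smooth _ hF1
  have hAt : ContDiff ℝ (⊤ : ℕ∞) (pd (1,0) A) := pd_smooth _ hA
  set R : ℝ × ℝ → ℝ := fun p =>
    2 * (pd (0,1) F p * pd (1,0) (pd (0,1) F) p + A p * pd (1,0) A p) with hRdef
  have hRcont : Continuous R :=
    continuous_const.mul (((hF1.continuous.mul hF1t.continuous)).add
      (hA.continuous.mul hAt.continuous))
  -- the x-integral of R vanishes for every time s
  have intzero : ∀ s, (∫ x in (0:ℝ)..L, R (s, x)) = 0 := by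
    intro s
    have hder : ∀ x ∈ Set.uIcc (0:ℝ) L,
        HasDerivAt (fun y => 2 * Hfun ς1 ς2 ς3 F A (s, y)) (R (s, x)) x := fun x _ =>
      (hasDerivAt_H_s14 ς1 ς2 ς3 hF hA E1 E2 s x).const_mul 2
    have hcont : Continuous fun x => R (s, x) := hRcont.comp (Continuous.prodMk_right s)
    rw [intervalIntegral.integral_eq_sub_of_hasDerivAt hder (hcont.intervalIntegrable _ _)]
    have hper := Hfun_periodic ς1 ς2 ς3 hF hA hFp hAp s 0
    rw [zero_add] at hper
    rw [hper]; ring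
  -- t-derivative of the energy density
  have hQd : ∀ t x, HasDerivAt (fun s => (pd (0,1) F (s,x))^2 + (A (s,x))^2) (R (t,x)) t := by
    intro t x
    refine (((hasDerivAt_slice_t hF1 t x).pow 2).add ((hasDerivAt_slice_t hA t x).pow 2)).congr_deriv ?_
    push_cast; ring
  have hQc : ∀ x, Continuous fun s => R (s,x) := fun x =>
    hRcont.comp (continuous_id.prodMk continuous_const)
  have ftc : ∀ x : ℝ, ((pd (0,1) F (t₂,x))^2 + (A (t₂,x))^2) - ((pd (0,1) F (t₁,x))^2 + (A (t₁,x))^2)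
      = ∫ s in t₁..t₂, R (s,x) := fun x =>
    (intervalIntegral.integral_eq_sub_of_hasDerivAt (fun s _ => hQd s x)
      ((hQc x).intervalIntegrable _ _)).symm
  have key : (∫ x in (0:ℝ)..L,
      (((pd (0,1) F (t₂,x))^2 + (A (t₂,x))^2) - ((pd (0,1) F (t₁,x))^2 + (A (t₁,x))^2))) = 0 := by
    calc (∫ x in (0:ℝ)..L,
        (((pd (0,1) F (t₂,x))^2 + (A (t₂,x))^2) - ((pd (0,1) F (t₁,x))^2 + (A (t₁,x))^2)))
        = ∫ x in (0:ℝ)..L, ∫ s in t₁..t₂, R (s,x) :=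
          intervalIntegral.integral_congr (fun x _ => ftc x)
      _ = ∫ x in Set.Ioc (0:ℝ) L, ∫ s in Set.Ioc t₁ t₂, R (s,x) := by
          rw [intervalIntegral.integral_of_le hL.le]
          simp only [intervalIntegral.integral_of_le h12]
      _ = ∫ s in Set.Ioc t₁ t₂, ∫ x in Set.Ioc (0:ℝ) L, R (s,x) := by
          apply MeasureTheory.integral_integral_swap
          rw [Measure.prod_restrict, ← MeasureTheory.Measure.volume_eq_prod]
          have hc2 : Continuous (Function.uncurry fun x s => R (s, x)) :=
            hRcont.comp continuous_swap
          exact (hc2.continuousOn.integrableOn_compact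
            ((isCompact_Icc (a := (0:ℝ)) (b := L)).prod (isCompact_Icc (a := t₁) (b := t₂)))).mono_set
            (Set.prod_mono Set.Ioc_subset_Icc_self Set.Ioc_subset_Icc_self)
      _ = 0 := by
          have hz : ∀ s, (∫ x in Set.Ioc (0:ℝ) L, R (s,x)) = 0 := fun s => by
            rw [← intervalIntegral.integral_of_le hL.le]; exact intzero s
          simp only [hz, MeasureTheory.integral_zero]
  have i1 : IntervalIntegrable (fun x => (pd (0,1) F (t₁,x))^2 + (A (t₁,x))^2) volume 0 L :=
    (((hF1.continuous.comp (Continuous.prodMk_right t₁)).pow 2).add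
      ((hA.continuous.comp (Continuous.prodMk_right t₁)).pow 2)).intervalIntegrable _ _
  have i2 : IntervalIntegrable (fun x => (pd (0,1) F (t₂,x))^2 + (A (t₂,x))^2) volume 0 L :=
    (((hF1.continuous.comp (Continuous.prodMk_right t₂)).pow 2).add
      ((hA.continuous.comp (Continuous.prodMk_right t₂)).pow 2)).intervalIntegrable _ _
  rw [intervalIntegral.integral_sub i2 i1] at key
  linarith


/-- Conservation of the homogeneous Ḣ¹-type energy
`H1 = (1/2)∫ (f_x² + a²) dx` for the bosonic reduction of the super-2HS
equation (5.7); for `ς1 = ς2 = ς3 = 0` this is the two-component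
Hunter–Saxton equation. -/
theorem statement_14 (L : ℝ) (hL : 0 < L) (ς1 ς2 ς3 : ℝ)
    (f a : ℝ → ℝ → ℝ)
    (hf : ContDiff ℝ (⊤ : ℕ∞) (Function.uncurry f)) (ha : ContDiff ℝ (⊤ : ℕ∞) (Function.uncurry a))
    (hfp : ∀ t, Function.Periodic (f t) L) (hap : ∀ t, Function.Periodic (a t) L)
    (heq1 : ∀ t x, -deriv (fun s => deriv (deriv (f s)) x) t
      = ς1 * deriv (deriv (deriv (f t))) x - ς2 * deriv (deriv (a t)) x
        + 2 * deriv (f t) x * deriv (deriv (f t)) x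
        + f t x * deriv (deriv (deriv (f t))) x
        - a t x * deriv (a t) x)
    (heq2 : ∀ t x, deriv (fun s => a s x) t
      = ς2 * deriv (deriv (f t)) x - 2*ς3 * deriv (a t) x
        - deriv (fun y => a t y * f t y) x) :
    ∀ t₁ t₂ : ℝ,
      (1/2) * ∫ x in (0:ℝ)..L, ((deriv (f t₁) x)^2 + (a t₁ x)^2)
        = (1/2) * ∫ x in (0:ℝ)..L, ((deriv (f t₂) x)^2 + (a t₂ x)^2) := by
  intro t₁ t₂
  set F := Function.uncurry f with hFdef
  set A := Function.uncurry a with hAdef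
  have h1 : ∀ t, deriv (f t) = fun x => pd (0,1) F (t,x) := fun t =>
    funext fun x => (hasDerivAt_slice_x hf t x).deriv
  have h2 : ∀ t, deriv (deriv (f t)) = fun x => pd (0,1) (pd (0,1) F) (t,x) := by
    intro t; rw [h1 t]
    exact funext fun x => (hasDerivAt_slice_x (pd_smooth _ hf) t x).deriv
  have h3 : ∀ t, deriv (deriv (deriv (f t)))
      = fun x => pd (0,1) (pd (0,1) (pd (0,1) F)) (t,x) := by
    intro t; rw [h2 t]
    exact funext fun x => (hasDerivAt_slice_x (pd_smooth _ (pd_smooth _ hf)) t x).deriv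
  have ha1 : ∀ t, deriv (a t) = fun x => pd (0,1) A (t,x) := fun t =>
    funext fun x => (hasDerivAt_slice_x ha t x).deriv
  have ha2 : ∀ t, deriv (deriv (a t)) = fun x => pd (0,1) (pd (0,1) A) (t,x) := by
    intro t; rw [ha1 t]
    exact funext fun x => (hasDerivAt_slice_x (pd_smooth _ ha) t x).deriv
  have g2 : ∀ t x, deriv (deriv (f t)) x = pd (0,1) (pd (0,1) F) (t,x) := by
    intro t x; rw [h2 t]
  have gt : ∀ t x, deriv (fun s => deriv (deriv (f s)) x) t
      = pd (1,0) (pd (0,1) (pd (0,1) F)) (t,x) := by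
    intro t x
    have hfun : (fun s => deriv (deriv (f s)) x) = fun s => pd (0,1) (pd (0,1) F) (s,x) :=
      funext fun s => g2 s x
    rw [hfun]
    exact (hasDerivAt_slice_t (pd_smooth (0,1) (pd_smooth (0,1) hf)) t x).deriv
  have hE1 : ∀ t x, -(pd (1,0) (pd (0,1) (pd (0,1) F)) (t,x))
      = ς1 * pd (0,1) (pd (0,1) (pd (0,1) F)) (t,x) - ς2 * pd (0,1) (pd (0,1) A) (t,x)
        + 2 * pd (0,1) F (t,x) * pd (0,1) (pd (0,1) F) (t,x)
        + F (t,x) * pd (0,1) (pd (0,1) (pd (0,1) F)) (t,x)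
        - A (t,x) * pd (0,1) A (t,x) := by
    intro t x
    have h := heq1 t x
    rw [gt t x, h3 t, ha2 t, h2 t, h1 t, ha1 t] at h
    exact h
  have hE2 : ∀ t x, pd (1,0) A (t,x)
      = ς2 * pd (0,1) (pd (0,1) F) (t,x) - 2*ς3 * pd (0,1) A (t,x)
        - (pd (0,1) A (t,x) * F (t,x) + A (t,x) * pd (0,1) F (t,x)) := by
    intro t x
    have h := heq2 t x
    have k1 : deriv (fun s => a s x) t = pd (1,0) A (t,x) :=
      (hasDerivAt_slice_t ha t x).deriv
    have k2 : deriv (fun y => a t y * f t y) x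
        = pd (0,1) A (t,x) * F (t,x) + A (t,x) * pd (0,1) F (t,x) :=
      ((hasDerivAt_slice_x ha t x).mul (hasDerivAt_slice_x hf t x)).deriv
    rw [k1, k2, h2 t, ha1 t] at h
    exact h
  have hFp : ∀ t x, F (t, x + L) = F (t, x) := fun t x => hfp t x
  have hAp : ∀ t x, A (t, x + L) = A (t, x) := fun t x => hap t x
  have main := aux_conserved L hL ς1 ς2 ς3 hf ha hFp hAp hE1 hE2
  simp only [h1]
  rcases le_total t₁ t₂ with h | h
  · exact congrArg (fun z => (1:ℝ)/2 * z) (main t₁ t₂ h)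
  · exact (congrArg (fun z => (1:ℝ)/2 * z) (main t₂ t₁ h)).symm
end
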